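/- arXiv:1705.00942 — 6 statements merged into one kernel-verified Lean document; each statement's English description precedes it below -/
import Mathlib

section
/- The class of affine signatures is closed under identifying two variables: if f(x₁,…,x_n) is affine, then so is the arity-(n−1) function obtained by setting x_j = x_ℓ. -/
open Matrix

/-- The extended vector (x₁,…,x_k,1) over 𝔽₂. -/
def ext {k : ℕ} (x : Fin k → ZMod 2) : Fin (k + 1) → ZMod 2 := Fin.snoc x 1

/-- A function f : {0,1}^k → ℂ is affine if it has the form
λ · χ_{Ax=0} · i^{Σⱼ⟨αⱼ,x⟩} on the extended vector x = (x₁,…,x_k,1). -/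
def IsAffine (k : ℕ) (f : (Fin k → ZMod 2) → ℂ) : Prop :=
  ∃ (lam : ℂ) (m t : ℕ) (A : Matrix (Fin m) (Fin (k + 1)) (ZMod 2))
    (α : Fin t → Fin (k + 1) → ZMod 2),
    ∀ x, f x = lam * (if A.mulVec (ext x) = 0 then 1 else 0) *
      Complex.I ^ ((∑ j, (∑ i, α j i * ext x i).val) % 4)

/-- Assemble the row index (x₁,…,x_n) and column index (x₂ₙ,…,x_{n+1})
into the full argument (x₁,…,x₂ₙ). -/
def assemble {n : ℕ} (x y : Fin n → ZMod 2) : Fin (2 * n) → ZMod 2 :=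
  fun i => if h : (i : ℕ) < n then x ⟨i, h⟩
    else y ⟨2 * n - 1 - i, by have := i.isLt; omega⟩

/-- The signature matrix of an arity-2n signature. -/
def sigMatrix (n : ℕ) (f : (Fin (2 * n) → ZMod 2) → ℂ) :
    Matrix (Fin n → ZMod 2) (Fin n → ZMod 2) ℂ :=
  Matrix.of fun x y => f (assemble x y)

/-!
Identifying `x_j` with `x_ℓ` is a substitution `x ↦ x ∘ τ` of variables, and on extended vectors
every such substitution is a linear map `ext x ↦ M *ᵥ ext x` (the last coordinate `1` is sent to
itself). Composing the constraint matrix `A` with `M` and each `αⱼ` with `M` then exhibits the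
substituted function in affine form again.
-/

theorem IsAffine.comp_of_ext_eq_mulVec {k n : ℕ} {f : (Fin k → ZMod 2) → ℂ} (hf : IsAffine k f)
    (g : (Fin n → ZMod 2) → Fin k → ZMod 2) (M : Matrix (Fin (k + 1)) (Fin (n + 1)) (ZMod 2))
    (hg : ∀ x, _root_.ext (g x) = M *ᵥ _root_.ext x) : IsAffine n (f ∘ g) := by
  obtain ⟨lam, m, t, A, α, hf⟩ := hf
  refine ⟨lam, m, t, A * M, fun j => α j ᵥ* M, fun x => ?_⟩
  simp only [Function.comp_apply, hf, hg, mulVec_mulVec]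
  congr 4
  funext j
  exact congrArg ZMod.val (dotProduct_mulVec (α j) M (_root_.ext x))

def extIndex {k n : ℕ} (τ : Fin k → Fin n) : Fin (k + 1) → Fin (n + 1) :=
  Fin.snoc (Fin.castSucc ∘ τ) (Fin.last n)

theorem ext_comp {k n : ℕ} (x : Fin n → ZMod 2) (τ : Fin k → Fin n) :
    _root_.ext (x ∘ τ) = _root_.ext x ∘ extIndex τ := by
  funext i
  refine Fin.lastCases ?_ (fun i => ?_) i <;> simp [_root_.ext, extIndex]

theorem IsAffine.comp_reindex {k n : ℕ} {f : (Fin k → ZMod 2) → ℂ} (hf : IsAffine k f)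
    (τ : Fin k → Fin n) : IsAffine n (fun x => f (x ∘ τ)) :=
  hf.comp_of_ext_eq_mulVec _ (LinearMap.toMatrix' (LinearMap.funLeft _ _ (extIndex τ)))
    fun x => by rw [LinearMap.toMatrix'_mulVec]; exact ext_comp x τ

theorem Fin.comp_insertNth_id {α : Type*} {n : ℕ} (x : Fin n → α) (j : Fin (n + 1)) (l : Fin n) :
    x ∘ j.insertNth l id = j.insertNth (x l) x := by
  funext i
  refine j.succAboveCases ?_ (fun i => ?_) i <;> simp

theorem affine_closed_identify (n : ℕ) (f : (Fin (n + 1) → ZMod 2) → ℂ)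
    (hf : IsAffine (n + 1) f) (j : Fin (n + 1)) (l : Fin n) :
    IsAffine n (fun x => f (j.insertNth (x l) x)) := by
  simpa only [Fin.comp_insertNth_id] using hf.comp_reindex (j.insertNth l id)
end

section
/- The class of affine signatures is closed under summing out a variable: if f(x₁,…,x_n) is affine, then g(x₁,…,x_{j−1},x_{j+1},…,x_n) = Σ_{x_j∈{0,1}} f(x₁,…,x_n) is affine. -/
/-
Write f(x) = λ·[A x̂ = 0]·i^{Σₖ ⟨αₖ, x̂⟩} with x̂ = (x, 1). If some constraint row of A
involves x_j, that row expresses x_j as an affine function of the other variables, so only one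
term of the sum survives and the sum is f after an affine substitution, which is again affine.
Otherwise the constraints ignore x_j, and since val(a + c) = val a + val c - 2·val(a c) on 𝔽₂,
setting x_j = 1 instead of 0 multiplies the phase by i^s·(-1)^{⟨δ, x̂⟩} for a constant s and a
vector δ. According to s mod 4, the factor 1 + i^s·(-1)^{⟨δ, x̂⟩} is a constant times either a
new linear constraint or a new phase term.
-/

open Matrix

def affineSig {ι : Type*} [Fintype ι] {m t : ℕ} (lam : ℂ) (A : Matrix (Fin m) ι (ZMod 2))
    (α : Matrix (Fin t) ι (ZMod 2)) (v : ι → ZMod 2) : ℂ :=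
  lam * (if A *ᵥ v = 0 then 1 else 0) * Complex.I ^ ∑ k, ((α *ᵥ v) k).val

lemma isAffine_iff_exists_affineSig {k : ℕ} {f : (Fin k → ZMod 2) → ℂ} :
    IsAffine k f ↔ ∃ (lam : ℂ) (m t : ℕ) (A : Matrix (Fin m) (Fin (k + 1)) (ZMod 2))
      (α : Matrix (Fin t) (Fin (k + 1)) (ZMod 2)),
      f = fun x => affineSig lam A α (_root_.ext x) := by
  simp only [IsAffine, affineSig, ← Complex.I_pow_eq_pow_mod, funext_iff]
  rfl

lemma isAffine_affineSig {k m t : ℕ} (lam : ℂ) (A : Matrix (Fin m) (Fin (k + 1)) (ZMod 2))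
    (α : Matrix (Fin t) (Fin (k + 1)) (ZMod 2)) :
    IsAffine k (fun x => affineSig lam A α (_root_.ext x)) :=
  isAffine_iff_exists_affineSig.2 ⟨lam, m, t, A, α, rfl⟩

lemma affineSig_mulVec {ι κ : Type*} [Fintype ι] [Fintype κ] {m t : ℕ} (lam : ℂ)
    (A : Matrix (Fin m) ι (ZMod 2)) (α : Matrix (Fin t) ι (ZMod 2)) (M : Matrix ι κ (ZMod 2))
    (v : κ → ZMod 2) :
    affineSig lam A α (M *ᵥ v) = affineSig lam (A * M) (α * M) v := by
  simp only [affineSig, mulVec_mulVec]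

lemma ext_insertNth {n : ℕ} (j : Fin (n + 1)) (b : ZMod 2) (x : Fin n → ZMod 2) :
    _root_.ext (j.insertNth b x) = j.castSucc.insertNth b (_root_.ext x) := by
  funext i
  cases i using Fin.lastCases with
  | last =>
    rw [← Fin.succAbove_ne_last_last (Fin.castSucc_lt_last j).ne, Fin.insertNth_apply_succAbove]
    simp [_root_.ext]
  | cast i =>
    cases i using Fin.succAboveCases j with
    | x => simp [_root_.ext]
    | p i =>
      rw [← Fin.castSucc_succAbove_castSucc, Fin.insertNth_apply_succAbove]
      simp [_root_.ext]

lemma dotProduct_insertNth {R : Type*} [NonUnitalNonAssocSemiring R] {n : ℕ}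
    (u : Fin (n + 1) → R) (p : Fin (n + 1)) (b : R) (w : Fin n → R) :
    u ⬝ᵥ p.insertNth b w = u p * b + (u ∘ p.succAbove) ⬝ᵥ w := by
  simp [dotProduct, Fin.sum_univ_succAbove _ p]

lemma exists_mulVec_eq_insertNth {R : Type*} [CommSemiring R] {n : ℕ} (p : Fin (n + 1))
    (ℓ : Fin n → R) :
    ∃ M : Matrix (Fin (n + 1)) (Fin n) R, ∀ v, M *ᵥ v = p.insertNth (ℓ ⬝ᵥ v) v :=
  ⟨Fin.insertNth (α := fun _ => Fin n → R) p ℓ (1 : Matrix (Fin n) (Fin n) R), fun v => by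
    ext q
    cases q using Fin.succAboveCases p with
    | x =>
      rw [Fin.insertNth_apply_same]
      exact congrArg (· ⬝ᵥ v) (Fin.insertNth_apply_same (α := fun _ => Fin n → R) _ _ _)
    | p i =>
      rw [Fin.insertNth_apply_succAbove]
      exact (congrArg (· ⬝ᵥ v)
        (Fin.insertNth_apply_succAbove (α := fun _ => Fin n → R) _ _ _ _)).trans
          (congrFun (one_mulVec v) i)⟩

lemma I_pow_sum_val_add {ι : Type*} [Fintype ι] (a c : ι → ZMod 2) :
    Complex.I ^ ∑ k, (a k + c k).val =
      Complex.I ^ (∑ k, (a k).val) * Complex.I ^ (∑ k, (c k).val) * (-1) ^ (c ⬝ᵥ a).val := by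
  have hval : ∀ x y : ZMod 2, (x + y).val + 2 * (y * x).val = x.val + y.val := by decide
  set N := ∑ k, (c k * a k).val
  have hpar : N % 2 = (c ⬝ᵥ a).val := by
    rw [← ZMod.val_natCast, Nat.cast_sum]
    simp only [ZMod.natCast_val, ZMod.cast_id', id, dotProduct]
  have hsum : ∑ k, (a k + c k).val + 2 * N = ∑ k, (a k).val + ∑ k, (c k).val := by
    rw [Finset.mul_sum, ← Finset.sum_add_distrib, ← Finset.sum_add_distrib]
    exact Finset.sum_congr rfl fun k _ => hval (a k) (c k)
  calc Complex.I ^ ∑ k, (a k + c k).val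
      = Complex.I ^ (∑ k, (a k + c k).val + 2 * N) * (-1) ^ N := by
        rw [pow_add, pow_mul, Complex.I_sq, mul_assoc, ← mul_pow]; norm_num
    _ = _ := by rw [hsum, pow_add, neg_one_pow_eq_pow_mod_two, hpar]

lemma affineSig_add_of_mulVec_eq_zero {ι : Type*} [Fintype ι] {m t : ℕ} (lam : ℂ)
    (A : Matrix (Fin m) ι (ZMod 2)) (α : Matrix (Fin t) ι (ZMod 2)) {e : ι → ZMod 2}
    (he : A *ᵥ e = 0) (u : ι → ZMod 2) :
    affineSig lam A α (u + e) = affineSig lam A α u *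
      (Complex.I ^ (∑ k, ((α *ᵥ e) k).val) * (-1) ^ ((α *ᵥ e) ᵥ* α ⬝ᵥ u).val) := by
  simp only [affineSig, mulVec_add, he, add_zero, Pi.add_apply, I_pow_sum_val_add,
    dotProduct_mulVec]
  ring

lemma sum_affineSig_insertNth_of_mulVec_single_eq_zero {n m t : ℕ} (lam : ℂ)
    (A : Matrix (Fin m) (Fin (n + 1)) (ZMod 2)) (α : Matrix (Fin t) (Fin (n + 1)) (ZMod 2))
    {p : Fin (n + 1)} (hp : A *ᵥ Pi.single p 1 = 0) (v : Fin n → ZMod 2) :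
    ∑ b : ZMod 2, affineSig lam A α (p.insertNth b v) =
      affineSig lam A α (p.insertNth (0 : ZMod 2) v) *
        (1 + Complex.I ^ (∑ k, ((α *ᵥ Pi.single p 1) k).val) *
          (-1) ^ ((α *ᵥ Pi.single p 1) ᵥ* α ⬝ᵥ p.insertNth (0 : ZMod 2) v).val) := by
  have hone : (p.insertNth 1 v : Fin (n + 1) → ZMod 2) = p.insertNth 0 v + Pi.single p 1 := by
    rw [← Fin.insertNth_zero_right, ← Fin.insertNth_add, zero_add, add_zero]
  calc ∑ b : ZMod 2, affineSig lam A α (p.insertNth b v)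
      = affineSig lam A α (p.insertNth 0 v) + affineSig lam A α (p.insertNth 1 v) :=
        Fin.sum_univ_two _
    _ = _ := by rw [hone, affineSig_add_of_mulVec_eq_zero lam A α hp]; ring

lemma sum_affineSig_insertNth_of_entry_eq_one {n m t : ℕ} (lam : ℂ)
    {A : Matrix (Fin m) (Fin (n + 1)) (ZMod 2)} (α : Matrix (Fin t) (Fin (n + 1)) (ZMod 2))
    {p : Fin (n + 1)} {r : Fin m} (hr : A r p = 1) (v : Fin n → ZMod 2) :
    ∑ b : ZMod 2, affineSig lam A α (p.insertNth b v) =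
      affineSig lam A α (p.insertNth ((A r ∘ p.succAbove) ⬝ᵥ v) v) := by
  refine Fintype.sum_eq_single _ fun b hb => ?_
  have hrow : (A *ᵥ p.insertNth b v) r ≠ 0 := by
    change A r ⬝ᵥ p.insertNth b v ≠ 0
    rw [dotProduct_insertNth, hr, one_mul]
    exact fun h => hb ((eq_neg_of_add_eq_zero_left h).trans (ZMod.neg_eq_self_mod_two _))
  have hA : A *ᵥ p.insertNth b v ≠ 0 := fun h => hrow (congrFun h r)
  simp [affineSig, hA]

namespace IsAffine

variable {k : ℕ} {f : (Fin k → ZMod 2) → ℂ}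

lemma const_mul (hf : IsAffine k f) (c : ℂ) : IsAffine k (fun x => c * f x) := by
  obtain ⟨lam, m, t, A, α, h⟩ := hf
  exact ⟨c * lam, m, t, A, α, fun x => by simp only [h]; ring⟩

lemma mul_indicator (hf : IsAffine k f) (a : Fin (k + 1) → ZMod 2) (c : ZMod 2) :
    IsAffine k (fun x => f x * if a ⬝ᵥ _root_.ext x = c then 1 else 0) := by
  obtain ⟨lam, m, t, A, α, rfl⟩ := isAffine_iff_exists_affineSig.1 hf
  refine isAffine_iff_exists_affineSig.2
    ⟨lam, m + 1, t, of (vecCons (a - Pi.single (Fin.last k) c) (A ·)), α, funext fun x => ?_⟩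
  have hlast : (a - Pi.single (Fin.last k) c) ⬝ᵥ _root_.ext x = a ⬝ᵥ _root_.ext x - c := by
    simp [sub_dotProduct, single_dotProduct, _root_.ext]
  have hA : (of fun i => A i) = A := rfl
  simp only [affineSig, cons_mulVec, cons_eq_zero_iff, hlast, sub_eq_zero, hA]
  split_ifs <;> simp_all

lemma mul_I_pow (hf : IsAffine k f) (a : Fin (k + 1) → ZMod 2) :
    IsAffine k (fun x => f x * Complex.I ^ (a ⬝ᵥ _root_.ext x).val) := by
  obtain ⟨lam, m, t, A, α, rfl⟩ := isAffine_iff_exists_affineSig.1 hf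
  refine isAffine_iff_exists_affineSig.2
    ⟨lam, m, t + 1, A, of (vecCons a (α ·)), funext fun x => ?_⟩
  have hα : (of fun i => α i) = α := rfl
  simp only [affineSig, cons_mulVec, Fin.sum_univ_succ, cons_val_zero, cons_val_succ, pow_add, hα]
  ring

lemma mul_one_add_I_pow_mul_neg_one_pow (hf : IsAffine k f) (s : ℕ) (δ : Fin (k + 1) → ZMod 2) :
    IsAffine k (fun x => f x * (1 + Complex.I ^ s * (-1) ^ (δ ⬝ᵥ _root_.ext x).val)) := by
  have hval : ∀ d : ZMod 2, d.val = 0 ∧ d = 0 ∨ d.val = 1 ∧ d = 1 := by decide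
  rw [Complex.I_pow_eq_pow_mod]
  -- For d ∈ 𝔽₂: 1 + (-1)^d = 2·[d = 0],  1 + i(-1)^d = (1 + i)·i^{3d},
  -- 1 - (-1)^d = 2·[d = 1],  1 - i(-1)^d = (1 - i)·i^d.
  obtain h | h | h | h : s % 4 = 0 ∨ s % 4 = 1 ∨ s % 4 = 2 ∨ s % 4 = 3 := by omega
  all_goals rw [h]
  on_goal 1 => convert (hf.mul_indicator δ 0).const_mul 2 using 2 with x
  on_goal 2 =>
    convert ((hf.mul_I_pow δ).mul_I_pow δ |>.mul_I_pow δ).const_mul (1 + Complex.I) using 2 with x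
  on_goal 3 => convert (hf.mul_indicator δ 1).const_mul 2 using 2 with x
  on_goal 4 => convert (hf.mul_I_pow δ).const_mul (1 - Complex.I) using 2 with x
  all_goals
    obtain ⟨hv, hd⟩ | ⟨hv, hd⟩ := hval (δ ⬝ᵥ _root_.ext x) <;> simp only [hv] <;>
      grind [Complex.I_sq]

end IsAffine

theorem affine_closed_sum (n : ℕ) (f : (Fin (n + 1) → ZMod 2) → ℂ)
    (hf : IsAffine (n + 1) f) (j : Fin (n + 1)) :
    IsAffine n (fun x => ∑ b : ZMod 2, f (j.insertNth b x)) := by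
  obtain ⟨lam, m, t, A, α, rfl⟩ := isAffine_iff_exists_affineSig.1 hf
  simp only [ext_insertNth]
  by_cases hcol : A *ᵥ Pi.single j.castSucc 1 = 0
  · obtain ⟨M, hM⟩ := exists_mulVec_eq_insertNth j.castSucc (0 : Fin (n + 1) → ZMod 2)
    simp only [zero_dotProduct] at hM
    simp only [sum_affineSig_insertNth_of_mulVec_single_eq_zero lam A α hcol, ← hM,
      affineSig_mulVec, dotProduct_mulVec]
    exact (isAffine_affineSig lam _ _).mul_one_add_I_pow_mul_neg_one_pow _ _
  · obtain ⟨r, hr⟩ := Function.ne_iff.1 hcol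
    have hentry : A r j.castSucc = 1 := by
      simpa using (by decide : ∀ z : ZMod 2, z ≠ 0 → z = 1) _ hr
    obtain ⟨M, hM⟩ := exists_mulVec_eq_insertNth j.castSucc (A r ∘ j.castSucc.succAbove)
    simp only [sum_affineSig_insertNth_of_entry_eq_one lam α hentry, ← hM, affineSig_mulVec]
    exact isAffine_affineSig lam _ _
end

section
/- Every affine signature can be written, up to a nonzero complex scalar, as χ_{Ax=0}·i^{Q(x)}, where Q is a homogeneous quadratic polynomial over ℤ in which every cross term x_j x_ℓ (j ≠ ℓ) has an even coefficient, and the exponent is evaluated mod 4; conversely, every such function is affine. -/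
open Matrix

/-- The extended vector over ℤ, with 0-1 entries. -/
def intExt {k : ℕ} (x : Fin k → ZMod 2) : Fin (k + 1) → ℤ :=
  fun i => ((ext x i).val : ℤ)

/-!
Every integer satisfies `s² ≡ (s mod 2) (mod 4)`. Hence the exponent `∑ⱼ ⟨αⱼ, x⟩` of an affine
signature is `∑ⱼ (α̃ⱼ ⬝ x)² = xᵀ (BᵀB) x` mod 4, where `B` is the integer matrix with rows the
0-1 lifts `α̃ⱼ`. Conversely, for a symmetric `S` and a 0-1 vector `w`,
`wᵀSw = ∑ⱼ Sⱼⱼ wⱼ + ∑_{j<l} Sⱼₗ · 2wⱼwₗ`, where `wⱼ = ⟨eⱼ, w⟩` and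
`2wⱼwₗ ≡ wⱼ + wₗ - ⟨eⱼ + eₗ, w⟩ (mod 4)`. Sums `∑ⱼ ⟨αⱼ, ·⟩` are closed under addition, hence
under multiplication by any element of `ℤ/4`, so `wᵀSw` is again such a sum.
-/

-- `3 = -1` in `ℤ/4`: twice a product of bits is `a + b - (a xor b)`.
theorem ZMod.two_mul_val_mul_val (a b : ZMod 2) :
    (2 * (a.val * b.val) : ZMod 4) = a.val + b.val + 3 * (a + b).val := by
  fin_cases a <;> fin_cases b <;> decide

theorem ZMod.val_mul_val_self (a : ZMod 2) : (a.val * a.val : ZMod 4) = a.val := by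
  fin_cases a <;> decide

theorem ZMod.intCast_sq_eq_val (s : ℤ) : ((s ^ 2 : ℤ) : ZMod 4) = ((s : ZMod 2).val : ZMod 4) := by
  rw [← ZMod.cast_intCast (by norm_num : 2 ∣ 4) s, Int.cast_pow]
  generalize (s : ZMod 4) = a
  revert a
  decide

theorem Int.toNat_emod_eq_val (q : ℤ) (N : ℕ) [NeZero N] : (q % N).toNat = (q : ZMod N).val := by
  have := ZMod.val_intCast (n := N) q
  omega

theorem Finset.sum_sum_eq_sum_diag_add_two_mul_sum_lt {ι R : Type*} [Fintype ι] [LinearOrder ι]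
    [CommSemiring R] (f : ι → ι → R) (hf : ∀ i j, f i j = f j i) :
    ∑ i, ∑ j, f i j = ∑ i, f i i + 2 * ∑ i, ∑ j, if i < j then f i j else 0 := by
  have trichotomy : ∀ i j, f i j = (if i = j then f i j else 0) + (if i < j then f i j else 0)
      + (if j < i then f j i else 0) := by
    intro i j
    rcases lt_trichotomy i j with h | rfl | h
    · simp [h, h.ne, h.not_gt]
    · simp
    · simp [h, h.ne', h.not_gt, hf i j]
  calc ∑ i, ∑ j, f i j
      = ∑ i, f i i + ∑ i, ∑ j, (if i < j then f i j else 0)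
          + ∑ i, ∑ j, (if j < i then f j i else 0) := by
        simp only [Finset.sum_congr rfl fun i _ => Finset.sum_congr rfl fun j _ => trichotomy i j,
          Finset.sum_add_distrib, Finset.sum_ite_eq, Finset.mem_univ, if_true]
    _ = _ := by rw [Finset.sum_comm (f := fun i j => if j < i then f j i else 0)]; ring

variable {ι : Type*}

def liftInt (v : ι → ZMod 2) : ι → ℤ := fun i => (v i).val

def gramMatrix {t : ℕ} (α : Fin t → ι → ZMod 2) : Matrix ι ι ℤ :=
  (Matrix.of fun j => liftInt (α j))ᵀ * Matrix.of fun j => liftInt (α j)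

theorem isSymm_gramMatrix {t : ℕ} (α : Fin t → ι → ZMod 2) : (gramMatrix α).IsSymm := by
  rw [gramMatrix, IsSymm, transpose_mul, transpose_transpose]

variable [Fintype ι]

def linearPhase {t : ℕ} (α : Fin t → ι → ZMod 2) (v : ι → ZMod 2) : ZMod 4 :=
  ∑ j, ((α j ⬝ᵥ v).val : ZMod 4)

def quadraticPhase (S : Matrix ι ι ℤ) (v : ι → ZMod 2) : ZMod 4 :=
  ((liftInt v ⬝ᵥ S *ᵥ liftInt v : ℤ) : ZMod 4)

theorem intCast_liftInt_dotProduct (a v : ι → ZMod 2) :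
    ((liftInt a ⬝ᵥ liftInt v : ℤ) : ZMod 2) = a ⬝ᵥ v := by
  simp [liftInt, dotProduct]

theorem quadraticPhase_gramMatrix {t : ℕ} (α : Fin t → ι → ZMod 2) :
    quadraticPhase (gramMatrix α) = linearPhase α := by
  funext v
  have sum_sq : liftInt v ⬝ᵥ gramMatrix α *ᵥ liftInt v
      = ∑ j, (liftInt (α j) ⬝ᵥ liftInt v) ^ 2 := by
    rw [gramMatrix, ← mulVec_mulVec, dotProduct_mulVec, vecMul_transpose]
    simp [dotProduct, mulVec, sq]
  simp only [quadraticPhase, linearPhase, sum_sq, Int.cast_sum, ZMod.intCast_sq_eq_val,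
    intCast_liftInt_dotProduct]

variable (ι) in
def linearPhases : AddSubmonoid ((ι → ZMod 2) → ZMod 4) where
  carrier := {g | ∃ (t : ℕ) (α : Fin t → ι → ZMod 2), g = linearPhase α}
  zero_mem' := ⟨0, finZeroElim, by funext; simp [linearPhase]⟩
  add_mem' := by
    rintro _ _ ⟨t, α, rfl⟩ ⟨s, β, rfl⟩
    exact ⟨t + s, Fin.append α β, by funext; simp [linearPhase, Fin.sum_univ_add]⟩

theorem dotProduct_val_mem_linearPhases (a : ι → ZMod 2) :
    (fun v => ((a ⬝ᵥ v).val : ZMod 4)) ∈ linearPhases ι :=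
  ⟨1, fun _ => a, by funext; simp [linearPhase]⟩

theorem smul_mem_linearPhases (c : ZMod 4) {g : (ι → ZMod 2) → ZMod 4}
    (hg : g ∈ linearPhases ι) : c • g ∈ linearPhases ι := by
  rw [← ZMod.natCast_zmod_val c, Nat.cast_smul_eq_nsmul]
  exact nsmul_mem hg _

theorem val_mem_linearPhases [DecidableEq ι] (i : ι) :
    (fun v : ι → ZMod 2 => ((v i).val : ZMod 4)) ∈ linearPhases ι := by
  simpa only [single_dotProduct, one_mul] using dotProduct_val_mem_linearPhases (Pi.single i 1)

theorem two_mul_val_mul_val_mem_linearPhases [DecidableEq ι] (i j : ι) :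
    (fun v : ι → ZMod 2 => 2 * (((v i).val : ZMod 4) * (v j).val)) ∈ linearPhases ι := by
  have polarization : (fun v : ι → ZMod 2 => 2 * (((v i).val : ZMod 4) * (v j).val))
      = (fun v => ((v i).val : ZMod 4)) + (fun v => ((v j).val : ZMod 4))
        + (3 : ZMod 4) • fun v => (((Pi.single i 1 + Pi.single j 1) ⬝ᵥ v).val : ZMod 4) := by
    funext v
    simp only [add_dotProduct, single_dotProduct, one_mul, ZMod.two_mul_val_mul_val,
      Pi.add_apply, Pi.smul_apply, smul_eq_mul]
  rw [polarization]
  exact add_mem (add_mem (val_mem_linearPhases i) (val_mem_linearPhases j))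
    (smul_mem_linearPhases _ (dotProduct_val_mem_linearPhases _))

theorem quadraticPhase_apply (S : Matrix ι ι ℤ) (v : ι → ZMod 2) :
    quadraticPhase S v = ∑ i, ∑ j, (S i j : ZMod 4) * (v i).val * (v j).val := by
  simp only [quadraticPhase, liftInt, dotProduct, mulVec, Int.cast_sum, Int.cast_mul,
    Int.cast_natCast, Finset.mul_sum]
  exact Finset.sum_congr rfl fun i _ => Finset.sum_congr rfl fun j _ => by ring

theorem quadraticPhase_mem_linearPhases [LinearOrder ι] {S : Matrix ι ι ℤ} (hS : S.IsSymm) :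
    quadraticPhase S ∈ linearPhases ι := by
  have expand : quadraticPhase S = ∑ i, ((S i i : ZMod 4) • fun v => ((v i).val : ZMod 4))
      + ∑ i, ∑ j, if i < j then (S i j : ZMod 4) •
          (fun v : ι → ZMod 2 => 2 * (((v i).val : ZMod 4) * (v j).val)) else 0 := by
    funext v
    rw [quadraticPhase_apply, Finset.sum_sum_eq_sum_diag_add_two_mul_sum_lt _
      fun i j => by rw [← hS.apply i j]; ring]
    simp only [Pi.add_apply, Finset.sum_apply, Pi.smul_apply, ite_apply, Pi.zero_apply,
      smul_eq_mul, mul_assoc, ZMod.val_mul_val_self, Finset.mul_sum, mul_ite, mul_zero]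
    exact congrArg _ (Finset.sum_congr rfl fun i _ => Finset.sum_congr rfl fun j _ => by
      rw [mul_left_comm])
  rw [expand]
  refine add_mem (sum_mem fun i _ => smul_mem_linearPhases _ (val_mem_linearPhases i))
    (sum_mem fun i _ => sum_mem fun j _ => ?_)
  split_ifs
  · exact smul_mem_linearPhases _ (two_mul_val_mul_val_mem_linearPhases i j)
  · exact zero_mem _

/-- An affine signature is, up to a scalar, χ_{Ax=0}·i^{Q(x)} where Q is a
homogeneous quadratic integer polynomial all of whose cross terms have even
coefficients (equivalently Q(x) = xᵀSx for a symmetric integer matrix S),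
the exponent evaluated mod 4; and conversely. -/
theorem affine_iff_quadratic (n : ℕ) (f : (Fin n → ZMod 2) → ℂ) :
    IsAffine n f ↔
      ∃ (c : ℂ) (m : ℕ) (A : Matrix (Fin m) (Fin (n + 1)) (ZMod 2))
        (S : Matrix (Fin (n + 1)) (Fin (n + 1)) ℤ), S.IsSymm ∧
        ∀ x, f x = c * (if A.mulVec (ext x) = 0 then 1 else 0) *
          Complex.I ^ ((intExt x ⬝ᵥ S.mulVec (intExt x)) % 4).toNat := by
  have linear_exponent : ∀ {t} (α : Fin t → Fin (n + 1) → ZMod 2) x,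
      (∑ j, (∑ i, α j i * ext x i).val) % 4 = (linearPhase α (ext x)).val := fun α x => by
    rw [linearPhase, ← ZMod.val_natCast, Nat.cast_sum]
    rfl
  have quadratic_exponent : ∀ (S : Matrix (Fin (n + 1)) (Fin (n + 1)) ℤ) x,
      ((intExt x ⬝ᵥ S *ᵥ intExt x) % 4).toNat = (quadraticPhase S (ext x)).val :=
    fun S x => Int.toNat_emod_eq_val _ 4
  simp only [IsAffine, linear_exponent, quadratic_exponent]
  constructor
  · rintro ⟨c, m, t, A, α, hf⟩
    refine ⟨c, m, A, gramMatrix α, isSymm_gramMatrix α, ?_⟩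
    simpa only [quadraticPhase_gramMatrix] using hf
  · rintro ⟨c, m, A, S, hS, hf⟩
    obtain ⟨t, α, hα⟩ := quadraticPhase_mem_linearPhases hS
    exact ⟨c, m, t, A, α, by simpa only [hα] using hf⟩
end

section
/- Let f be an affine signature of arity 2n with nonsingular signature matrix M_f, with dimension-r affine support and written (after substitution) as f = μ·χ·i^{xᵀC₁x + y'ᵀC₂y' + 2y'ᵀC₃x} with |μ| = 2^{−r/2}. Then M_f is unitary. -/
/-!
Column `(y', y'')` of row `x` is supported on `y'' = Ax + By' + b`, so rows `x, x'` with
`Ax ≠ Ax'` are orthogonal, and otherwise their inner product is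
`|μ|² i^(xᵀC₁x - x'ᵀC₁x') ∑_{y'} (-1)^(y'ᵀC₃(x - x'))`. The character sum is `2^r` or `0`
according as `C₃(x - x')` is even or not, which gives norm `|μ|² 2^r = 1` on the diagonal.
Off the diagonal a nonzero value would make row `x` a multiple of row `x'`, impossible for a
nonsingular matrix. Hence `M Mᴴ = 1`, and then `Mᴴ` is the inverse of `M`.
-/

open Matrix ComplexConjugate Complex

/-- A 0-1 bit vector viewed over ℤ. -/
def iv {k : ℕ} (v : Fin k → ZMod 2) : Fin k → ℤ := fun i => ((v i).val : ℤ)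

namespace Complex

lemma I_pow_toNat_emod_four (m : ℤ) : I ^ (m % 4).toNat = I ^ m := by
  rw [← zpow_natCast, Int.toNat_of_nonneg (Int.emod_nonneg m four_ne_zero)]
  conv_rhs => rw [← Int.emod_add_mul_ediv m 4]
  rw [zpow_add₀ I_ne_zero, _root_.zpow_mul, zpow_ofNat, I_pow_four, _root_.one_zpow, mul_one]

lemma I_zpow_add_two_mul (m k : ℤ) : I ^ (m + 2 * k) = I ^ m * (-1) ^ k := by
  rw [zpow_add₀ I_ne_zero, _root_.zpow_mul, zpow_two, I_mul_I]

lemma conj_I_zpow (m : ℤ) : conj (I ^ m) = I ^ (-m) := by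
  rw [map_zpow₀, conj_I, ← inv_I, _root_.inv_zpow, _root_.zpow_neg]

lemma mul_conj_mul_two_pow_eq_one {μ : ℂ} {r : ℕ} (hμ : ‖μ‖ = 2 ^ (-(r : ℝ) / 2)) :
    μ * conj μ * 2 ^ r = 1 := by
  have h : ((2 : ℝ) ^ (-(r : ℝ) / 2)) ^ 2 * 2 ^ r = 1 := by
    rw [← Real.rpow_mul_natCast zero_le_two, ← Real.rpow_natCast, ← Real.rpow_add zero_lt_two]
    norm_num
  rw [mul_conj', hμ]
  exact_mod_cast h

end Complex

lemma zpow_sum₀ {ι G₀ : Type*} [CommGroupWithZero G₀] {a : G₀} (ha : a ≠ 0) (s : Finset ι)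
    (f : ι → ℤ) : a ^ (∑ i ∈ s, f i) = ∏ i ∈ s, a ^ f i := by
  induction s using Finset.cons_induction with
  | empty => simp
  | cons i s hi ih => rw [Finset.sum_cons, Finset.prod_cons, zpow_add₀ ha, ih]

lemma sum_neg_one_zpow_iv_dotProduct {k : ℕ} (w : Fin k → ℤ) :
    ∑ y : Fin k → ZMod 2, (-1 : ℂ) ^ (iv y ⬝ᵥ w) = if ∀ j, 2 ∣ w j then 2 ^ k else 0 := by
  have hcoord (j : Fin k) :
      ∑ c : ZMod 2, (-1 : ℂ) ^ ((c.val : ℤ) * w j) = if 2 ∣ w j then 2 else 0 := by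
    change ∑ c : Fin 2, (-1 : ℂ) ^ ((c.val : ℤ) * w j) = _
    rw [Fin.sum_univ_two]
    rcases Int.even_or_odd (w j) with h | h
    · norm_num [h.two_dvd, h.neg_one_zpow]
    · simp [Int.odd_iff.1 h, h.neg_one_zpow]
  simp only [dotProduct, iv, zpow_sum₀ (neg_ne_zero.2 (one_ne_zero' ℂ))]
  rw [← Fintype.prod_sum (fun j (c : ZMod 2) => (-1 : ℂ) ^ ((c.val : ℤ) * w j))]
  simp only [hcoord, Finset.prod_ite_zero, Finset.prod_const, Finset.card_univ,
    Fintype.card_fin, Finset.mem_univ, true_implies]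

namespace Matrix

theorem row_ne_smul_row_of_mul_eq_one {m n R : Type*} [Fintype n] [DecidableEq m]
    [Semiring R] [Nontrivial R] {M : Matrix m n R} {N : Matrix n m R} (h : M * N = 1)
    {x x' : m} (hx : x ≠ x') (c : R) : M x' ≠ c • M x := by
  intro hrow
  have hdiag := congrFun (congrFun h x') x'
  rw [mul_apply, hrow] at hdiag
  simp only [Pi.smul_apply, smul_eq_mul, mul_assoc, ← Finset.mul_sum, ← mul_apply, h,
    one_apply_ne hx, one_apply_eq, mul_zero] at hdiag
  exact zero_ne_one hdiag

theorem mul_conjTranspose_apply_of_affine_support {α β γ : Type*} [Fintype β] [Fintype γ]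
    [DecidableEq γ] [Add γ] [IsRightCancelAdd γ] {M : Matrix α (β × γ) ℂ} {μ : ℂ}
    {f : α → γ} {g : β → γ} {φ : α → β → ℂ}
    (hM : ∀ x y₁ y₂, M x (y₁, y₂) = μ * (if y₂ = f x + g y₁ then 1 else 0) * φ x y₁)
    (x x' : α) :
    (M * Mᴴ) x x' = if f x = f x' then μ * conj μ * ∑ y, φ x y * conj (φ x' y) else 0 := by
  have hfiber (y₁ : β) : ∑ y₂, M x (y₁, y₂) * conj (M x' (y₁, y₂)) =
      if f x = f x' then μ * conj μ * (φ x y₁ * conj (φ x' y₁)) else 0 := by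
    simp only [hM, map_mul, apply_ite conj, map_zero, mul_one, mul_zero, ite_mul, zero_mul,
      mul_ite, Finset.sum_ite_eq', Finset.mem_univ, if_true, add_left_inj, eq_comm (a := f x')]
    split_ifs <;> ring
  rw [mul_apply, Fintype.sum_prod_type]
  simp only [conjTranspose_apply, star_def, hfiber, Finset.sum_ite_irrel, Finset.sum_const_zero,
    Finset.mul_sum]

end Matrix

section Phase

variable {n r : ℕ} (C₁ : Matrix (Fin n) (Fin n) ℤ) (C₂ : Matrix (Fin r) (Fin r) ℤ)
  (C₃ : Matrix (Fin r) (Fin n) ℤ)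

def phaseExponent (x : Fin n → ZMod 2) (y : Fin r → ZMod 2) : ℤ :=
  iv x ⬝ᵥ C₁ *ᵥ iv x + iv y ⬝ᵥ C₂ *ᵥ iv y + 2 * (iv y ⬝ᵥ C₃ *ᵥ iv x)

lemma phaseExponent_eq (x x' : Fin n → ZMod 2) (y : Fin r → ZMod 2) :
    phaseExponent C₁ C₂ C₃ x y = iv x ⬝ᵥ C₁ *ᵥ iv x - iv x' ⬝ᵥ C₁ *ᵥ iv x' +
      2 * (iv y ⬝ᵥ C₃ *ᵥ (iv x - iv x')) + phaseExponent C₁ C₂ C₃ x' y := by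
  simp only [phaseExponent, mulVec_sub, dotProduct_sub]
  ring

lemma sum_I_zpow_phaseExponent_mul_conj (x x' : Fin n → ZMod 2) :
    ∑ y, I ^ phaseExponent C₁ C₂ C₃ x y * conj (I ^ phaseExponent C₁ C₂ C₃ x' y) =
      I ^ (iv x ⬝ᵥ C₁ *ᵥ iv x - iv x' ⬝ᵥ C₁ *ᵥ iv x') *
        if ∀ j, 2 ∣ (C₃ *ᵥ (iv x - iv x')) j then 2 ^ r else 0 := by
  simp_rw [conj_I_zpow, ← zpow_add₀ I_ne_zero, phaseExponent_eq C₁ C₂ C₃ x x',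
    add_neg_cancel_right, I_zpow_add_two_mul, ← Finset.mul_sum, sum_neg_one_zpow_iv_dotProduct]

lemma I_zpow_phaseExponent_of_two_dvd {x x' : Fin n → ZMod 2}
    (hw : ∀ j, 2 ∣ (C₃ *ᵥ (iv x - iv x')) j) (y : Fin r → ZMod 2) :
    I ^ phaseExponent C₁ C₂ C₃ x y =
      I ^ (iv x ⬝ᵥ C₁ *ᵥ iv x - iv x' ⬝ᵥ C₁ *ᵥ iv x') * I ^ phaseExponent C₁ C₂ C₃ x' y := by
  have heven : Even (iv y ⬝ᵥ C₃ *ᵥ (iv x - iv x')) :=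
    even_iff_two_dvd.2 (Finset.dvd_sum fun j _ => (hw j).mul_left _)
  rw [phaseExponent_eq C₁ C₂ C₃ x x', zpow_add₀ I_ne_zero, I_zpow_add_two_mul,
    heven.neg_one_zpow, mul_one]

end Phase

theorem affine_nonsingular_unitary_general (n r : ℕ)
    (A : Matrix (Fin (n - r)) (Fin n) (ZMod 2))
    (B : Matrix (Fin (n - r)) (Fin r) (ZMod 2))
    (b : Fin (n - r) → ZMod 2)
    (C₁ : Matrix (Fin n) (Fin n) ℤ)
    (C₂ : Matrix (Fin r) (Fin r) ℤ)
    (C₃ : Matrix (Fin r) (Fin n) ℤ)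
    (μ : ℂ) (hμ : ‖μ‖ = (2 : ℝ) ^ (-(r : ℝ) / 2))
    (M : Matrix (Fin n → ZMod 2) ((Fin r → ZMod 2) × (Fin (n - r) → ZMod 2)) ℂ)
    (hM : ∀ x y, M x y =
      μ * (if y.2 = A.mulVec x + B.mulVec y.1 + b then 1 else 0) *
        Complex.I ^ (((iv x ⬝ᵥ C₁.mulVec (iv x) + iv y.1 ⬝ᵥ C₂.mulVec (iv y.1)
          + 2 * (iv y.1 ⬝ᵥ C₃.mulVec (iv x))) % 4).toNat))
    (hns : ∃ Minv : Matrix ((Fin r → ZMod 2) × (Fin (n - r) → ZMod 2)) (Fin n → ZMod 2) ℂ,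
      M * Minv = 1 ∧ Minv * M = 1) :
    M * Mᴴ = 1 ∧ Mᴴ * M = 1 := by
  obtain ⟨Minv, hMMinv, hMinvM⟩ := hns
  have hM' (x y₁ y₂) : M x (y₁, y₂) = μ * (if y₂ = A *ᵥ x + (B *ᵥ y₁ + b) then 1 else 0) *
      I ^ phaseExponent C₁ C₂ C₃ x y₁ := by
    rw [hM, I_pow_toNat_emod_four, ← add_assoc]
    rfl
  have hunitary : M * Mᴴ = 1 := by
    ext x x'
    rw [mul_conjTranspose_apply_of_affine_support hM', sum_I_zpow_phaseExponent_mul_conj]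
    rcases eq_or_ne x x' with rfl | hx
    · simpa using mul_conj_mul_two_pow_eq_one hμ
    rw [one_apply_ne hx]
    split_ifs with hA hw
    · refine absurd ?_ (row_ne_smul_row_of_mul_eq_one hMMinv hx.symm
        (I ^ (iv x ⬝ᵥ C₁ *ᵥ iv x - iv x' ⬝ᵥ C₁ *ᵥ iv x')))
      ext ⟨y₁, y₂⟩
      simp only [hM', hA, I_zpow_phaseExponent_of_two_dvd C₁ C₂ C₃ hw, Pi.smul_apply, smul_eq_mul]
      ring
    all_goals simp
  refine ⟨hunitary, ?_⟩
  calc Mᴴ * M = (Minv * M) * Mᴴ * M := by rw [hMinvM, Matrix.one_mul]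
    _ = Minv * M := by rw [Matrix.mul_assoc Minv, hunitary, Matrix.mul_one]
    _ = 1 := hMinvM

/-- Unitarity lemma: a nonsingular affine signature matrix, written in the
parametrized form with support y'' = Ax + By' + b and entries
μ·i^{xᵀC₁x + y'ᵀC₂y' + 2y'ᵀC₃x} with |μ| = 2^{-r/2}, is unitary. -/
theorem affine_nonsingular_unitary (n r : ℕ) (hr : r ≤ n)
    (A : Matrix (Fin (n - r)) (Fin n) (ZMod 2))
    (B : Matrix (Fin (n - r)) (Fin r) (ZMod 2))
    (b : Fin (n - r) → ZMod 2)
    (C₁ : Matrix (Fin n) (Fin n) ℤ) (hC₁ : C₁.IsSymm)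
    (C₂ : Matrix (Fin r) (Fin r) ℤ) (hC₂ : C₂.IsSymm)
    (C₃ : Matrix (Fin r) (Fin n) ℤ)
    (μ : ℂ) (hμ : ‖μ‖ = (2 : ℝ) ^ (-(r : ℝ) / 2))
    (M : Matrix (Fin n → ZMod 2) ((Fin r → ZMod 2) × (Fin (n - r) → ZMod 2)) ℂ)
    (hM : ∀ x y, M x y =
      μ * (if y.2 = A.mulVec x + B.mulVec y.1 + b then 1 else 0) *
        Complex.I ^ (((iv x ⬝ᵥ C₁.mulVec (iv x) + iv y.1 ⬝ᵥ C₂.mulVec (iv y.1)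
          + 2 * (iv y.1 ⬝ᵥ C₃.mulVec (iv x))) % 4).toNat))
    (hns : ∃ Minv : Matrix ((Fin r → ZMod 2) × (Fin (n - r) → ZMod 2)) (Fin n → ZMod 2) ℂ,
      M * Minv = 1 ∧ Minv * M = 1) :
    M * Mᴴ = 1 ∧ Mᴴ * M = 1 :=
  affine_nonsingular_unitary_general n r A B b C₁ C₂ C₃ μ hμ M hM hns
end

section
/- Under the hypotheses of the unitarity lemma (f affine, M_f nonsingular, normalized with |λ| = 2^{−r/2}), the (n+r)×n matrix C_f formed by stacking A (the support matrix over 𝔽₂) on top of C₃ (mod 2) has trivial kernel over 𝔽₂, i.e., C_f w = 0 implies w = 0. -/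
/-!
If `w ≠ 0` satisfies `A w = 0` and `C₃ w ≡ 0 (mod 2)`, then rows `w` and `0` of `M_f` have the
same support, and the cross term `2 y'ᵀ C₃ w` is divisible by `4`, so their phases differ only
by the constant `i ^ (wᵀ C₁ w)`. Two proportional rows with a nonzero factor contradict the
invertibility of `M_f`.
-/

open Matrix

theorem Complex.I_pow_emod_four_toNat (k : ℤ) : Complex.I ^ (k % 4).toNat = Complex.I ^ k := by
  rw [Complex.I_zpow_eq_zpow_mod k, ← zpow_natCast,
    Int.toNat_of_nonneg (Int.emod_nonneg k (by norm_num))]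

theorem Complex.I_zpow_two_mul_of_even {t : ℤ} (ht : Even t) : Complex.I ^ (2 * t) = 1 := by
  obtain ⟨s, rfl⟩ := ht
  rw [show 2 * (s + s) = ((4 : ℕ) : ℤ) * s by push_cast; ring, _root_.zpow_mul, zpow_natCast,
    Complex.I_pow_four, _root_.one_zpow]

theorem Matrix.eq_zero_of_row_eq_smul_row {m n R : Type*} [Fintype n] [DecidableEq m]
    [CommSemiring R] {M : Matrix m n R} {N : Matrix n m R} (hMN : M * N = 1) {i j : m}
    (hij : i ≠ j) {c : R} (hrow : M i = c • M j) : c = 0 :=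
  calc c = c * (M * N) j j := by rw [hMN, one_apply_eq, mul_one]
    _ = (M * N) i j := by rw [mul_apply_eq_vecMul, mul_apply_eq_vecMul, hrow, smul_vecMul]; rfl
    _ = 0 := by rw [hMN, one_apply_ne hij]

theorem intCast_comp_iv {k : ℕ} (v : Fin k → ZMod 2) : Int.cast ∘ iv v = v := by
  funext i
  simp [iv]

theorem iv_zero {k : ℕ} : iv (0 : Fin k → ZMod 2) = 0 := by
  funext i
  simp [iv]

theorem even_dotProduct_mulVec_iv {m : Type*} [Fintype m] {k : ℕ} {C : Matrix m (Fin k) ℤ}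
    {w : Fin k → ZMod 2} (hC : (C.map (Int.cast : ℤ → ZMod 2)) *ᵥ w = 0) (u : m → ℤ) :
    Even (u ⬝ᵥ C *ᵥ iv w) := by
  rw [← ZMod.intCast_eq_zero_iff_even, ← eq_intCast (Int.castRingHom _), RingHom.map_dotProduct]
  have hCw : Int.castRingHom (ZMod 2) ∘ (C *ᵥ iv w) = 0 := by
    funext i
    rw [Function.comp_apply, RingHom.map_mulVec, Int.coe_castRingHom, intCast_comp_iv, hC]
  rw [hCw, dotProduct_zero]

theorem affine_Cf_nonsingular_general (n r : ℕ)
    (A : Matrix (Fin (n - r)) (Fin n) (ZMod 2))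
    (B : Matrix (Fin (n - r)) (Fin r) (ZMod 2))
    (b : Fin (n - r) → ZMod 2)
    (C₁ : Matrix (Fin n) (Fin n) ℤ)
    (C₂ : Matrix (Fin r) (Fin r) ℤ)
    (C₃ : Matrix (Fin r) (Fin n) ℤ)
    (μ : ℂ)
    (M : Matrix (Fin n → ZMod 2) ((Fin r → ZMod 2) × (Fin (n - r) → ZMod 2)) ℂ)
    (hM : ∀ x y, M x y =
      μ * (if y.2 = A.mulVec x + B.mulVec y.1 + b then 1 else 0) *
        Complex.I ^ (((iv x ⬝ᵥ C₁.mulVec (iv x) + iv y.1 ⬝ᵥ C₂.mulVec (iv y.1)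
          + 2 * (iv y.1 ⬝ᵥ C₃.mulVec (iv x))) % 4).toNat))
    (hns : ∃ Minv : Matrix ((Fin r → ZMod 2) × (Fin (n - r) → ZMod 2)) (Fin n → ZMod 2) ℂ,
      M * Minv = 1 ∧ Minv * M = 1) :
    ∀ w : Fin n → ZMod 2,
      A.mulVec w = 0 → (C₃.map (Int.cast : ℤ → ZMod 2)).mulVec w = 0 → w = 0 := by
  intro w hAw hCw
  by_contra hw
  obtain ⟨Minv, hMMinv, -⟩ := hns
  have hrow : M w = Complex.I ^ (iv w ⬝ᵥ C₁ *ᵥ iv w) • M 0 := by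
    funext y
    simp only [hM, Complex.I_pow_emod_four_toNat, hAw, iv_zero, mulVec_zero, dotProduct_zero,
      mul_zero, add_zero, zpow_zero, mul_one, Pi.smul_apply, smul_eq_mul,
      zpow_add₀ Complex.I_ne_zero, Complex.I_zpow_two_mul_of_even (even_dotProduct_mulVec_iv hCw _)]
    ring
  exact zpow_ne_zero _ Complex.I_ne_zero (eq_zero_of_row_eq_smul_row hMMinv hw hrow)

/-- Under the hypotheses of the unitarity lemma, the stacked matrix
C_f = [A; C₃ mod 2] has trivial kernel over 𝔽₂. -/
theorem affine_Cf_nonsingular (n r : ℕ) (hr : r ≤ n)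
    (A : Matrix (Fin (n - r)) (Fin n) (ZMod 2))
    (B : Matrix (Fin (n - r)) (Fin r) (ZMod 2))
    (b : Fin (n - r) → ZMod 2)
    (C₁ : Matrix (Fin n) (Fin n) ℤ) (hC₁ : C₁.IsSymm)
    (C₂ : Matrix (Fin r) (Fin r) ℤ) (hC₂ : C₂.IsSymm)
    (C₃ : Matrix (Fin r) (Fin n) ℤ)
    (μ : ℂ) (hμ : ‖μ‖ = (2 : ℝ) ^ (-(r : ℝ) / 2))
    (M : Matrix (Fin n → ZMod 2) ((Fin r → ZMod 2) × (Fin (n - r) → ZMod 2)) ℂ)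
    (hM : ∀ x y, M x y =
      μ * (if y.2 = A.mulVec x + B.mulVec y.1 + b then 1 else 0) *
        Complex.I ^ (((iv x ⬝ᵥ C₁.mulVec (iv x) + iv y.1 ⬝ᵥ C₂.mulVec (iv y.1)
          + 2 * (iv y.1 ⬝ᵥ C₃.mulVec (iv x))) % 4).toNat))
    (hns : ∃ Minv : Matrix ((Fin r → ZMod 2) × (Fin (n - r) → ZMod 2)) (Fin n → ZMod 2) ℂ,
      M * Minv = 1 ∧ Minv * M = 1) :
    ∀ w : Fin n → ZMod 2,
      A.mulVec w = 0 → (C₃.map (Int.cast : ℤ → ZMod 2)).mulVec w = 0 → w = 0 :=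
  affine_Cf_nonsingular_general n r A B b C₁ C₂ C₃ μ M hM hns
end

section
/- If M_f is a unitary affine signature matrix in 𝒰𝒜_n and P ∈ 𝒫_n is an n-qubit Pauli group element, then M_f P M_f* is again in 𝒫_n; consequently 𝒢𝒜_n / U(1) ⊆ 𝒞_n. -/
open Matrix

/-- The set 𝒜ₙ of signature matrices of affine signatures of arity 2n. -/
def AffMats (n : ℕ) : Set (Matrix (Fin n → ZMod 2) (Fin n → ZMod 2) ℂ) :=
  {M | ∃ f, IsAffine (2 * n) f ∧ M = sigMatrix n f}

noncomputable def pI : Matrix (ZMod 2) (ZMod 2) ℂ := 1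
noncomputable def pX : Matrix (ZMod 2) (ZMod 2) ℂ :=
  Matrix.of fun x y => if x = y then 0 else 1
noncomputable def pY : Matrix (ZMod 2) (ZMod 2) ℂ :=
  Matrix.of fun x y => if x = y then 0 else if x = 0 then -Complex.I else Complex.I
noncomputable def pZ : Matrix (ZMod 2) (ZMod 2) ℂ :=
  Matrix.of fun x y => if x = y then (if x = 0 then 1 else -1) else 0

noncomputable def tensorP (n : ℕ) (σ : Fin n → Matrix (ZMod 2) (ZMod 2) ℂ) :
    Matrix (Fin n → ZMod 2) (Fin n → ZMod 2) ℂ :=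
  Matrix.of fun x y => ∏ k, σ k (x k) (y k)

noncomputable def pauliUnits (n : ℕ) :
    Set (Matrix (Fin n → ZMod 2) (Fin n → ZMod 2) ℂ)ˣ :=
  {u | ∃ σ : Fin n → Matrix (ZMod 2) (ZMod 2) ℂ,
    (∀ k, σ k ∈ ({pI, pX, pY, pZ} : Set (Matrix (ZMod 2) (ZMod 2) ℂ))) ∧
    (u : Matrix (Fin n → ZMod 2) (Fin n → ZMod 2) ℂ) = tensorP n σ}

/-- Membership in the Pauli group 𝒫ₙ. -/
def InPauli (n : ℕ) (P : Matrix (Fin n → ZMod 2) (Fin n → ZMod 2) ℂ) : Prop :=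
  ∃ u ∈ Subgroup.closure (pauliUnits n),
    (u : Matrix (Fin n → ZMod 2) (Fin n → ZMod 2) ℂ) = P

/-!
A signature matrix of an affine signature has the form `M x y = λ · [L (x, y) = c] · i ^ Q (x, y)`
with `L` additive and `Q` a `ℤ/4`-valued quadratic function:
`Q (z + u) + Q 0 = Q z + Q u + 2 β(u, z)` with `β(u, ·)` additive over `𝔽₂`.
The entry `(x, x')` of `M X^a Z^b Mᴴ` is then `|λ|²` times a fourth root of unity times a
character sum over the affine fibre `{y | L (x', y) = c}`. That sum vanishes unless the character
is trivial on the direction of the fibre, and otherwise equals the size of the fibre times a sign.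
For unitary `M`, `|λ|² · #fibre = 1`, so `M X^a Z^b Mᴴ` is a unitary matrix whose entries are `0`
or fourth roots of unity and whose support depends only on `x + x'`: it is supported on a single
shift `x' = x + a'`, and its phase is an affine function of `x'`, i.e. it is a phase times
`X^a' Z^b'`. These matrices generate the Pauli group.
For merely invertible `M`, the case `a = b = 0` shows that `M Mᴴ` is a positive multiple of `1`:
two rows differing by a shift in the direction of the support would be proportional.
-/

open Finset
open scoped ComplexConjugate

lemma AddChar.map_sum_eq_prod {ι A M : Type*} [AddCommMonoid A] [CommMonoid M]
    (ψ : AddChar A M) (s : Finset ι) (f : ι → A) : ψ (∑ i ∈ s, f i) = ∏ i ∈ s, ψ (f i) := by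
  classical
  induction s using Finset.induction_on with
  | empty => simp
  | insert i s hi ih => rw [sum_insert hi, prod_insert hi, AddChar.map_add_eq_mul, ih]

lemma ZMod.eq_zero_or_eq_one (s : ZMod 2) : s = 0 ∨ s = 1 := by
  revert s
  decide

namespace AffineClifford

section Phases

def double : ZMod 2 →+ ZMod 4 := AddMonoidHom.mk' (fun s => 2 * (s.val : ZMod 4)) (by decide)

noncomputable def iPow : AddChar (ZMod 4) ℂ := AddChar.zmodChar 4 Complex.I_pow_four

noncomputable def sign : AddChar (ZMod 2) ℂ := iPow.compAddMonoidHom double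

lemma iPow_natCast (k : ℕ) : iPow k = Complex.I ^ k := AddChar.zmodChar_apply' _ k

lemma iPow_one : iPow 1 = Complex.I := by simpa using iPow_natCast 1

lemma iPow_double (s : ZMod 2) : iPow (double s) = sign s := rfl

lemma iPow_mul_conj (z : ZMod 4) : iPow z * conj (iPow z) = 1 := by
  rw [← AddChar.map_neg_eq_conj, ← AddChar.map_add_eq_mul, add_neg_cancel,
    AddChar.map_zero_eq_one]

lemma sign_one : sign 1 = -1 := by
  rw [← iPow_double, show double 1 = ((2 : ℕ) : ZMod 4) by decide, iPow_natCast, Complex.I_sq]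

lemma sign_eq_one_iff (s : ZMod 2) : sign s = 1 ↔ s = 0 := by
  rcases ZMod.eq_zero_or_eq_one s with rfl | rfl <;> simp [sign_one]
  norm_num

lemma conj_sign (s : ZMod 2) : conj (sign s) = sign s := by
  rw [← AddChar.map_neg_eq_conj, ZMod.neg_eq_self_mod_two]

lemma sign_mul_self (s : ZMod 2) : sign s * sign s = 1 := by
  simpa [iPow_double, conj_sign] using iPow_mul_conj (double s)

lemma iPow_mul_sign_mul_conj (z : ZMod 4) (s : ZMod 2) :
    iPow z * sign s * conj (iPow z * sign s) = 1 := by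
  rw [map_mul, mul_mul_mul_comm, iPow_mul_conj, conj_sign, sign_mul_self, one_mul]

end Phases

section Pauli

variable {n : ℕ}

lemma sum_zmod_two {M : Type*} [AddCommMonoid M] (f : ZMod 2 → M) : ∑ s, f s = f 0 + f 1 :=
  Fin.sum_univ_two f

lemma ext_zmod_two {α : Type*} {A B : Matrix (ZMod 2) (ZMod 2) α} (h₀₀ : A 0 0 = B 0 0)
    (h₀₁ : A 0 1 = B 0 1) (h₁₀ : A 1 0 = B 1 0) (h₁₁ : A 1 1 = B 1 1) : A = B := by
  ext p q
  rcases ZMod.eq_zero_or_eq_one p with rfl | rfl <;>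
    rcases ZMod.eq_zero_or_eq_one q with rfl | rfl <;> assumption

lemma one_add_one_zmod_two : (1 : ZMod 2) + 1 = 0 := rfl

/-- `pauliXZ a b` and `weyl a b` are `X^a Z^b` on one and on `n` qubits. -/
noncomputable def pauliXZ (a b : ZMod 2) : Matrix (ZMod 2) (ZMod 2) ℂ :=
  of fun p q => if q = p + a then sign (b * q) else 0

noncomputable def weyl (a b : Fin n → ZMod 2) : Matrix (Fin n → ZMod 2) (Fin n → ZMod 2) ℂ :=
  of fun x y => if y = x + a then sign (b ⬝ᵥ y) else 0

lemma pauliXZ_zero_zero : pauliXZ 0 0 = pI := by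
  apply ext_zmod_two <;> simp [pauliXZ, pI]

lemma pauliXZ_one_zero : pauliXZ 1 0 = pX := by
  apply ext_zmod_two <;> simp [pauliXZ, pX, one_add_one_zmod_two]

lemma pauliXZ_zero_one : pauliXZ 0 1 = pZ := by
  apply ext_zmod_two <;> simp [pauliXZ, pZ, sign_one]

lemma pY_eq_smul_pauliXZ : pY = iPow 1 • pauliXZ 1 1 := by
  apply ext_zmod_two <;> simp [pauliXZ, pY, sign_one, iPow_one, one_add_one_zmod_two]

lemma pauliXZ_eq_mul (a b : ZMod 2) : pauliXZ a b = pauliXZ a 0 * pauliXZ 0 b := by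
  rcases ZMod.eq_zero_or_eq_one a with rfl | rfl <;>
    rcases ZMod.eq_zero_or_eq_one b with rfl | rfl <;>
    apply ext_zmod_two <;> simp [pauliXZ, Matrix.mul_apply, one_add_one_zmod_two]

lemma pauli_mul_self {σ : Matrix (ZMod 2) (ZMod 2) ℂ}
    (hσ : σ ∈ ({pI, pX, pY, pZ} : Set (Matrix (ZMod 2) (ZMod 2) ℂ))) : σ * σ = 1 := by
  rcases hσ with rfl | rfl | rfl | rfl <;> apply ext_zmod_two <;>
    simp [pI, pX, pY, pZ, Matrix.mul_apply, sum_zmod_two]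

lemma pX_mul_pY_mul_pZ : pX * pY * pZ = Complex.I • 1 := by
  apply ext_zmod_two <;> simp [pX, pY, pZ, Matrix.mul_apply, sum_zmod_two]

lemma tensorP_mul (σ τ : Fin n → Matrix (ZMod 2) (ZMod 2) ℂ) :
    tensorP n σ * tensorP n τ = tensorP n fun k => σ k * τ k := by
  ext x y
  simp only [tensorP, Matrix.mul_apply, of_apply]
  rw [prod_univ_sum, Fintype.piFinset_univ]
  exact sum_congr rfl fun z _ => prod_mul_distrib.symm

lemma tensorP_one : tensorP n (fun _ => 1) = 1 := by
  ext x y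
  simp only [tensorP, of_apply, Matrix.one_apply, Fintype.prod_ite_zero, prod_const_one,
    funext_iff]

lemma tensorP_smul (c : Fin n → ℂ) (σ : Fin n → Matrix (ZMod 2) (ZMod 2) ℂ) :
    tensorP n (fun k => c k • σ k) = (∏ k, c k) • tensorP n σ := by
  ext x y
  simp [tensorP, prod_mul_distrib]

lemma tensorP_of_eq_zero (hn : n = 0) (σ : Fin n → Matrix (ZMod 2) (ZMod 2) ℂ) :
    tensorP n σ = 1 := by
  subst hn
  ext x y
  rw [Subsingleton.elim x y]
  simp [tensorP]

lemma weyl_eq_tensorP (a b : Fin n → ZMod 2) :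
    weyl a b = tensorP n fun k => pauliXZ (a k) (b k) := by
  ext x y
  simp only [weyl, tensorP, pauliXZ, of_apply, Fintype.prod_ite_zero, funext_iff, Pi.add_apply,
    dotProduct, AddChar.map_sum_eq_prod]
  congr 1

lemma inPauli_coe_iff {u : (Matrix (Fin n → ZMod 2) (Fin n → ZMod 2) ℂ)ˣ} :
    InPauli n u ↔ u ∈ Subgroup.closure (pauliUnits n) :=
  ⟨fun ⟨_, hv, hvu⟩ => Units.ext hvu ▸ hv, fun hu => ⟨u, hu, rfl⟩⟩

lemma inPauli_one : InPauli n 1 := ⟨1, Subgroup.one_mem _, rfl⟩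

lemma inPauli_mul {P Q : Matrix (Fin n → ZMod 2) (Fin n → ZMod 2) ℂ} (hP : InPauli n P)
    (hQ : InPauli n Q) : InPauli n (P * Q) := by
  obtain ⟨u, hu, rfl⟩ := hP
  obtain ⟨v, hv, rfl⟩ := hQ
  exact ⟨u * v, Subgroup.mul_mem _ hu hv, rfl⟩

lemma inPauli_tensorP {σ : Fin n → Matrix (ZMod 2) (ZMod 2) ℂ}
    (hσ : ∀ k, σ k ∈ ({pI, pX, pY, pZ} : Set (Matrix (ZMod 2) (ZMod 2) ℂ))) :
    InPauli n (tensorP n σ) := by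
  have hsq : tensorP n σ * tensorP n σ = 1 := by
    simp only [tensorP_mul, pauli_mul_self (hσ _), tensorP_one]
  exact ⟨⟨_, _, hsq, hsq⟩, Subgroup.subset_closure ⟨σ, hσ, rfl⟩, rfl⟩

lemma inPauli_weyl (a b : Fin n → ZMod 2) : InPauli n (weyl a b) := by
  have hX : ∀ k, pauliXZ (a k) 0 ∈ ({pI, pX, pY, pZ} : Set (Matrix (ZMod 2) (ZMod 2) ℂ)) := by
    intro k
    rcases ZMod.eq_zero_or_eq_one (a k) with h | h <;>
      simp [h, pauliXZ_zero_zero, pauliXZ_one_zero]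
  have hZ : ∀ k, pauliXZ 0 (b k) ∈ ({pI, pX, pY, pZ} : Set (Matrix (ZMod 2) (ZMod 2) ℂ)) := by
    intro k
    rcases ZMod.eq_zero_or_eq_one (b k) with h | h <;>
      simp [h, pauliXZ_zero_zero, pauliXZ_zero_one]
  rw [weyl_eq_tensorP, funext fun k => pauliXZ_eq_mul (a k) (b k), ← tensorP_mul]
  exact inPauli_mul (inPauli_tensorP hX) (inPauli_tensorP hZ)

lemma inPauli_I_smul_one (hn : 0 < n) : InPauli n (Complex.I • 1) := by
  let k₀ : Fin n := ⟨0, hn⟩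
  let at₀ (σ : Matrix (ZMod 2) (ZMod 2) ℂ) : Fin n → Matrix (ZMod 2) (ZMod 2) ℂ :=
    fun k => if k = k₀ then σ else pI
  have hmem : ∀ σ ∈ ({pI, pX, pY, pZ} : Set (Matrix (ZMod 2) (ZMod 2) ℂ)),
      InPauli n (tensorP n (at₀ σ)) := fun σ hσ =>
    inPauli_tensorP fun k => by by_cases h : k = k₀ <;> simp [at₀, h, hσ]
  have hsite : (fun k => at₀ pX k * at₀ pY k * at₀ pZ k) =
      fun k => (if k = k₀ then Complex.I else 1) • (1 : Matrix (ZMod 2) (ZMod 2) ℂ) := by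
    ext1 k
    by_cases h : k = k₀ <;> simp [at₀, h, pX_mul_pY_mul_pZ, pI]
  have hprod : tensorP n (at₀ pX) * tensorP n (at₀ pY) * tensorP n (at₀ pZ) =
      Complex.I • 1 := by
    rw [tensorP_mul, tensorP_mul, hsite, tensorP_smul, tensorP_one, prod_ite_eq']
    simp
  rw [← hprod]
  exact inPauli_mul (inPauli_mul (hmem pX (by simp)) (hmem pY (by simp))) (hmem pZ (by simp))

lemma inPauli_iPow_smul (hn : 0 < n) (z : ZMod 4)
    {P : Matrix (Fin n → ZMod 2) (Fin n → ZMod 2) ℂ} (hP : InPauli n P) :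
    InPauli n (iPow z • P) := by
  rw [← ZMod.natCast_zmod_val z, iPow_natCast]
  induction z.val with
  | zero => simpa using hP
  | succ k ih =>
    rw [pow_succ', mul_smul, ← smul_one_mul Complex.I]
    exact inPauli_mul (inPauli_I_smul_one hn) ih

lemma exists_coe_eq_iPow_smul_weyl {u : (Matrix (Fin n → ZMod 2) (Fin n → ZMod 2) ℂ)ˣ}
    (hu : u ∈ pauliUnits n) :
    ∃ (z : ZMod 4) (a b : Fin n → ZMod 2), u = iPow z • weyl a b := by
  obtain ⟨σ, hσ, hu⟩ := hu
  have hσ' : ∀ k, ∃ (z : ZMod 4) (a b : ZMod 2), σ k = iPow z • pauliXZ a b := by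
    intro k
    rcases hσ k with h | h | h | h <;> rw [h]
    · exact ⟨0, 0, 0, by simp [pauliXZ_zero_zero]⟩
    · exact ⟨0, 1, 0, by simp [pauliXZ_one_zero]⟩
    · exact ⟨1, 1, 1, pY_eq_smul_pauliXZ⟩
    · exact ⟨0, 0, 1, by simp [pauliXZ_zero_one]⟩
  choose z a b hσk using hσ'
  refine ⟨∑ k, z k, a, b, ?_⟩
  rw [hu, funext hσk, tensorP_smul, weyl_eq_tensorP, AddChar.map_sum_eq_prod]

lemma inPauli_conj_of_conj_weyl {M : Matrix (Fin n → ZMod 2) (Fin n → ZMod 2) ℂ}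
    (hM : M ∈ unitary (Matrix (Fin n → ZMod 2) (Fin n → ZMod 2) ℂ))
    (hconj : ∀ a b, ∃ (z : ZMod 4) (a' b' : Fin n → ZMod 2),
      M * weyl a b * Mᴴ = iPow z • weyl a' b')
    {P : Matrix (Fin n → ZMod 2) (Fin n → ZMod 2) ℂ} (hP : InPauli n P) :
    InPauli n (M * P * Mᴴ) := by
  let U : (Matrix (Fin n → ZMod 2) (Fin n → ZMod 2) ℂ)ˣ :=
    ⟨M, Mᴴ, Unitary.mul_star_self_of_mem hM, Unitary.star_mul_self_of_mem hM⟩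
  have hgen : pauliUnits n ⊆
      (Subgroup.closure (pauliUnits n)).comap (MulAut.conj U).toMonoidHom := by
    intro u hu
    rw [SetLike.mem_coe, Subgroup.mem_comap, ← inPauli_coe_iff]
    change InPauli n (M * u * Mᴴ)
    -- for `n = 0` the Pauli group is trivial and does not contain the phases `iPow z • 1`
    rcases Nat.eq_zero_or_pos n with hn | hn
    · obtain ⟨σ, -, hu⟩ := hu
      rw [hu, tensorP_of_eq_zero hn, Matrix.mul_one, ← Matrix.star_eq_conjTranspose,
        Unitary.mul_star_self_of_mem hM]
      exact inPauli_one
    · obtain ⟨z, a, b, hu⟩ := exists_coe_eq_iPow_smul_weyl hu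
      obtain ⟨z', a', b', hMab⟩ := hconj a b
      rw [hu, Matrix.mul_smul, Matrix.smul_mul, hMab, smul_smul, ← AddChar.map_add_eq_mul]
      exact inPauli_iPow_smul hn _ (inPauli_weyl a' b')
  obtain ⟨u, hu, rfl⟩ := hP
  exact inPauli_coe_iff.2 ((Subgroup.closure_le _).2 hgen hu)

end Pauli

section Weyl

variable {n : ℕ}

lemma add_self_of_zmod_two (x : Fin n → ZMod 2) : x + x = 0 :=
  funext fun i => CharTwo.add_self_eq_zero (x i)

lemma add_add_self_of_zmod_two (x y : Fin n → ZMod 2) : y + (x + y) = x := by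
  rw [add_comm x, ← add_assoc, add_self_of_zmod_two, zero_add]

lemma weyl_apply (a b x y : Fin n → ZMod 2) :
    weyl a b x y = if y = x + a then sign (b ⬝ᵥ y) else 0 := rfl

lemma weyl_zero : weyl (0 : Fin n → ZMod 2) 0 = 1 := by
  ext x y
  simp [weyl_apply, Matrix.one_apply, eq_comm]

lemma mul_weyl_apply (M : Matrix (Fin n → ZMod 2) (Fin n → ZMod 2) ℂ) (a b x y : Fin n → ZMod 2) :
    (M * weyl a b) x y = M x (y + a) * sign (b ⬝ᵥ y) := by
  have hy : ∀ z, y = z + a ↔ z = y + a := fun z => by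
    constructor <;> rintro rfl <;> rw [add_assoc, add_self_of_zmod_two, add_zero]
  simp [Matrix.mul_apply, weyl_apply, hy]

lemma weyl_mem_unitary (a b : Fin n → ZMod 2) :
    weyl a b ∈ unitary (Matrix (Fin n → ZMod 2) (Fin n → ZMod 2) ℂ) := by
  have h : weyl a b * (weyl a b)ᴴ = 1 := by
    ext x x'
    simp only [Matrix.mul_apply, Matrix.conjTranspose_apply, weyl_apply, ite_mul, zero_mul,
      sum_ite_eq', mem_univ, if_true, add_left_inj, Matrix.one_apply]
    split_ifs
    · rw [Complex.star_def, conj_sign, sign_mul_self]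
    · simp
  exact Unitary.mem_iff.2 ⟨mul_eq_one_comm.1 h, h⟩

end Weyl

section Quadratic

variable {G : Type*} [AddCommGroup G]

def IsQuadratic (Q : G → ZMod 4) (β : G → G →+ ZMod 2) : Prop :=
  ∀ z u, Q (z + u) + Q 0 = Q z + Q u + double (β u z)

lemma IsQuadratic.apply_add {Q : G → ZMod 4} {β : G → G →+ ZMod 2} (hQ : IsQuadratic Q β)
    (z u : G) : Q (z + u) = Q z + (Q u - Q 0) + double (β u z) := by
  linear_combination hQ z u

lemma isQuadratic_sum_val {t : ℕ} (ℓ : Fin t → G →+ ZMod 2) (c : Fin t → ZMod 2) :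
    IsQuadratic (fun z => ∑ j, ((ℓ j z + c j).val : ZMod 4)) (fun u => ∑ j, ℓ j u • ℓ j) := by
  have key : ∀ a b c : ZMod 2, ((a + b + c).val : ZMod 4) + (c.val : ZMod 4) =
      ((a + c).val : ZMod 4) + ((b + c).val : ZMod 4) + double (b * a) := by decide
  intro z u
  simp only [map_add, AddMonoidHom.finsetSum_apply, AddMonoidHom.smul_apply, smul_eq_mul,
    map_sum, map_zero, zero_add, ← sum_add_distrib]
  exact sum_congr rfl fun j _ => key _ _ _

end Quadratic

section Fibers

variable {X Y H : Type*} [AddCommGroup X] [AddCommGroup Y] [AddCommGroup H]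

lemma map_mk_add_right (L : X × Y →+ H) (x : X) (y k : Y) :
    L (x, y + k) = L (x, y) + L (0, k) := by
  rw [← map_add, Prod.mk_add_mk, add_zero]

lemma map_zero_sub_eq_zero (L : X × Y →+ H) {c : H} {x : X} {y y₀ : Y} (hy : L (x, y) = c)
    (hy₀ : L (x, y₀) = c) : L (0, y - y₀) = 0 := by
  rw [← add_right_inj (L (x, y₀)), ← map_mk_add_right, add_sub_cancel, hy, hy₀, add_zero]

variable [Fintype Y] [DecidableEq H] (L : X × Y →+ H) (c : H)

lemma sum_fiber_eq_zero (χ : AddChar (X × Y) ℂ) (x : X) {k : Y} (hk : L (0, k) = 0)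
    (hχk : χ (0, k) ≠ 1) : ∑ y with L (x, y) = c, χ (x, y) = 0 := by
  set S := ∑ y with L (x, y) = c, χ (x, y)
  have hshift : S = S * χ (0, k) := by
    simp only [S, sum_filter, sum_mul]
    refine (Fintype.sum_equiv (Equiv.addRight k) _ _ fun y => ?_).symm
    simp only [Equiv.coe_addRight, map_mk_add_right, hk, add_zero]
    split_ifs <;> simp [← AddChar.map_add_eq_mul]
  have : S * (χ (0, k) - 1) = 0 := by linear_combination -hshift
  exact (mul_eq_zero.1 this).resolve_right (sub_ne_zero.2 hχk)

lemma sum_fiber_eq (χ : AddChar (X × Y) ℂ) (hχ : ∀ k, L (0, k) = 0 → χ (0, k) = 1) {x : X}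
    {y₀ : Y} (hy₀ : L (x, y₀) = c) :
    ∑ y with L (x, y) = c, χ (x, y) = #{y | L (x, y) = c} * χ (x, y₀) := by
  rw [← nsmul_eq_mul, ← sum_const]
  refine sum_congr rfl fun y hy => ?_
  rw [← add_sub_cancel y₀ y, ← add_zero x, ← Prod.mk_add_mk, AddChar.map_add_eq_mul,
    hχ _ (map_zero_sub_eq_zero L (mem_filter.1 hy).2 hy₀), mul_one, add_zero]

lemma card_fiber_eq {x x' : X} {y₀ y₀' : Y} (h : L (x, y₀) = c) (h' : L (x', y₀') = c) :
    #{y | L (x, y) = c} = #{y | L (x', y) = c} := by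
  have hshift : ∀ y, L (x', y + (y₀' - y₀)) = L (x, y) := by
    intro y
    rw [show y + (y₀' - y₀) = y₀' + (y - y₀) by abel, map_mk_add_right, h', ← h,
      ← map_mk_add_right, add_sub_cancel]
  exact card_equiv (Equiv.addRight (y₀' - y₀)) fun y => by simp [hshift]

end Fibers

lemma exists_dotProduct_eq {n p : ℕ} (g : (Fin n → ZMod p) →+ ZMod p) :
    ∃ b : Fin n → ZMod p, ∀ x, g x = b ⬝ᵥ x := by
  refine ⟨fun i => g fun j => if i = j then 1 else 0, fun x => ?_⟩
  rw [← AddMonoidHom.coe_toZModLinearMap p g, LinearMap.pi_apply_eq_sum_univ]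
  simp [dotProduct, mul_comm]

lemma exists_eq_add_dotProduct_of_fiber {n p : ℕ} {Y H : Type*} [AddCommGroup Y]
    [AddCommGroup H] (L : (Fin n → ZMod p) × Y →+ H) (c : H) (hL : ∀ x, ∃ y, L (x, y) = c)
    (h : (Fin n → ZMod p) × Y →+ ZMod p) (hh : ∀ k, L (0, k) = 0 → h (0, k) = 0) :
    ∃ (κ : ZMod p) (b : Fin n → ZMod p), ∀ x y, L (x, y) = c → h (x, y) = κ + b ⬝ᵥ x := by
  choose s hs using hL
  have hfiber : ∀ x y, L (x, y) = c → h (x, y) = h (x, s x) := by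
    intro x y hxy
    rw [show (x, y) = (x, s x) + (0, y - s x) by simp, map_add,
      hh _ (map_zero_sub_eq_zero L hxy (hs x)), add_zero]
  let g : (Fin n → ZMod p) →+ ZMod p := AddMonoidHom.mk' (fun x => h (x, s x) - h (0, s 0)) <| by
    intro x₁ x₂
    have hsum : ((x₁ + x₂, s x₁ + s x₂ - s 0) : (Fin n → ZMod p) × Y) =
        (x₁, s x₁) + (x₂, s x₂) - (0, s 0) := by simp
    have hmem : L (x₁ + x₂, s x₁ + s x₂ - s 0) = c := by
      rw [hsum, map_sub, map_add, hs, hs, hs, add_sub_cancel_right]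
    rw [← hfiber _ _ hmem, hsum, map_sub, map_add]
    ring
  obtain ⟨b, hb⟩ := exists_dotProduct_eq g
  refine ⟨h (0, s 0), b, fun x y hxy => ?_⟩
  rw [hfiber x y hxy, ← hb]
  simp [g]

section RowOperations

variable {ι R : Type*} [Fintype ι] [DecidableEq ι] [CommRing R] [Nontrivial R] {M : Matrix ι ι R}

lemma exists_ne_zero_of_isUnit (hM : IsUnit M) (i : ι) : ∃ j, M i j ≠ 0 := by
  by_contra! h
  rw [Matrix.isUnit_iff_isUnit_det, det_eq_zero_of_row_eq_zero i h] at hM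
  exact not_isUnit_zero hM

lemma not_isUnit_of_row_eq_mul {i j : ι} (hij : i ≠ j) {μ : R} (h : ∀ k, M i k = μ * M j k) :
    ¬ IsUnit M := by
  rw [Matrix.isUnit_iff_isUnit_det, ← det_updateRow_add_smul_self M hij (-μ),
    det_eq_zero_of_row_eq_zero i fun k => by simp [h]]
  exact not_isUnit_zero

end RowOperations

structure AffineForm (n : ℕ) (H : Type*) [AddCommGroup H] where
  lam : ℂ
  L : (Fin n → ZMod 2) × (Fin n → ZMod 2) →+ H
  c : H
  Q : (Fin n → ZMod 2) × (Fin n → ZMod 2) → ZMod 4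
  β : (Fin n → ZMod 2) × (Fin n → ZMod 2) → (Fin n → ZMod 2) × (Fin n → ZMod 2) →+ ZMod 2
  isQuadratic : IsQuadratic Q β

namespace AffineForm

variable {n : ℕ} {H : Type*} [AddCommGroup H] (F : AffineForm n H)

instance : SMul ℂ (AffineForm n H) := ⟨fun μ F => { F with lam := μ * F.lam }⟩

def conjPhase (a b w : Fin n → ZMod 2) : (Fin n → ZMod 2) × (Fin n → ZMod 2) →+ ZMod 2 :=
  AddMonoidHom.mk' (fun z => F.β (w, a) z + b ⬝ᵥ z.2) fun z z' => by
    simp only [map_add, Prod.snd_add, dotProduct_add]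
    ring

lemma conjPhase_apply (a b w : Fin n → ZMod 2) (z : (Fin n → ZMod 2) × (Fin n → ZMod 2)) :
    F.conjPhase a b w z = F.β (w, a) z + b ⬝ᵥ z.2 := rfl

/-- `M · X^a Z^b · Mᴴ` vanishes at `(x, x + w)` unless this holds. -/
def IsConjShift (a b w : Fin n → ZMod 2) : Prop :=
  F.L (w, a) = 0 ∧ ∀ k, F.L (0, k) = 0 → F.conjPhase a b w (0, k) = 0

variable [DecidableEq H]

noncomputable def toMatrix : Matrix (Fin n → ZMod 2) (Fin n → ZMod 2) ℂ :=
  of fun x y => if F.L (x, y) = F.c then F.lam * iPow (F.Q (x, y)) else 0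

def fiber (x : Fin n → ZMod 2) : Finset (Fin n → ZMod 2) := {y | F.L (x, y) = F.c}

lemma toMatrix_apply (x y : Fin n → ZMod 2) :
    F.toMatrix x y = if F.L (x, y) = F.c then F.lam * iPow (F.Q (x, y)) else 0 := rfl

lemma toMatrix_smul (μ : ℂ) : (μ • F).toMatrix = μ • F.toMatrix := by
  ext x y
  show (if F.L (x, y) = F.c then μ * F.lam * iPow (F.Q (x, y)) else 0) = μ * F.toMatrix x y
  simp only [toMatrix, of_apply, mul_ite, mul_zero, mul_assoc]

lemma toMatrix_apply_ne_zero {x y : Fin n → ZMod 2} (h : F.toMatrix x y ≠ 0) :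
    F.L (x, y) = F.c ∧ F.lam ≠ 0 := by
  rw [toMatrix_apply] at h
  split_ifs at h with hxy
  · exact ⟨hxy, left_ne_zero_of_mul h⟩
  · exact absurd rfl h

lemma toMatrix_add_of_map_eq_zero {w v : Fin n → ZMod 2} (hwv : F.L (w, v) = 0)
    (x y : Fin n → ZMod 2) :
    F.toMatrix (x + w) (y + v) =
      F.toMatrix x y * (iPow (F.Q (w, v) - F.Q 0) * sign (F.β (w, v) (x, y))) := by
  simp only [toMatrix_apply, ← Prod.mk_add_mk, map_add, hwv, add_zero, F.isQuadratic.apply_add,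
    AddChar.map_add_eq_mul, iPow_double]
  split_ifs <;> ring

lemma toMatrix_mul_conj (x y : Fin n → ZMod 2) :
    F.toMatrix x y * conj (F.toMatrix x y) =
      if F.L (x, y) = F.c then (Complex.normSq F.lam : ℂ) else 0 := by
  rw [toMatrix_apply]
  split_ifs
  · rw [map_mul, mul_mul_mul_comm, Complex.mul_conj, iPow_mul_conj, mul_one]
  · simp

lemma toMatrix_add_mul_conj (w v x y : Fin n → ZMod 2) :
    F.toMatrix (x + w) (y + v) * conj (F.toMatrix x y) =
      if F.L (w, v) = 0 then
        (if F.L (x, y) = F.c then (Complex.normSq F.lam : ℂ) else 0) *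
          (iPow (F.Q (w, v) - F.Q 0) * sign (F.β (w, v) (x, y)))
      else 0 := by
  by_cases hwv : F.L (w, v) = 0
  · rw [if_pos hwv, F.toMatrix_add_of_map_eq_zero hwv, mul_right_comm, toMatrix_mul_conj]
  · rw [if_neg hwv]
    by_cases hxy : F.L (x, y) = F.c
    · have : F.L (x + w, y + v) ≠ F.c := by
        rw [← Prod.mk_add_mk, map_add, hxy]
        simpa using hwv
      simp [toMatrix_apply, this]
    · simp [toMatrix_apply, hxy]

lemma mul_conjTranspose_apply_self (x : Fin n → ZMod 2) :
    (F.toMatrix * F.toMatrixᴴ) x x = Complex.normSq F.lam * #(F.fiber x) := by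
  simp only [Matrix.mul_apply, Matrix.conjTranspose_apply, Complex.star_def, toMatrix_mul_conj,
    sum_ite, sum_const_zero, add_zero, sum_const, nsmul_eq_mul, fiber, mul_comm]

lemma conj_weyl_apply_eq_sum (a b x x' : Fin n → ZMod 2) :
    (F.toMatrix * weyl a b * F.toMatrixᴴ) x x' =
      if F.L (x + x', a) = 0 then
        Complex.normSq F.lam * iPow (F.Q (x + x', a) - F.Q 0) *
          ∑ y ∈ F.fiber x', sign (F.conjPhase a b (x + x') (x', y))
      else 0 := by
  have hterm : ∀ y, F.toMatrix x (y + a) * sign (b ⬝ᵥ y) * conj (F.toMatrix x' y) =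
      if F.L (x + x', a) = 0 then
        (if F.L (x', y) = F.c then Complex.normSq F.lam * iPow (F.Q (x + x', a) - F.Q 0)
          else 0) * sign (F.conjPhase a b (x + x') (x', y))
      else 0 := by
    intro y
    conv_lhs => rw [← add_add_self_of_zmod_two x x', mul_right_comm, toMatrix_add_mul_conj]
    split_ifs <;> simp [conjPhase_apply, AddChar.map_add_eq_mul, mul_assoc]
  rw [Matrix.mul_apply]
  simp only [mul_weyl_apply, Matrix.conjTranspose_apply, Complex.star_def, hterm]
  split_ifs
  · simp only [ite_mul, zero_mul, ← sum_filter, mul_sum, fiber]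
  · simp

lemma conj_weyl_apply_of_isConjShift {a b x x' y₀ : Fin n → ZMod 2}
    (h : F.IsConjShift a b (x + x')) (hy₀ : F.L (x', y₀) = F.c) :
    (F.toMatrix * weyl a b * F.toMatrixᴴ) x x' =
      Complex.normSq F.lam * #(F.fiber x') *
        (iPow (F.Q (x + x', a) - F.Q 0) * sign (F.conjPhase a b (x + x') (x', y₀))) := by
  have hsum := sum_fiber_eq F.L F.c (sign.compAddMonoidHom (F.conjPhase a b (x + x')))
    (fun k hk => by simp [h.2 k hk]) hy₀
  simp only [AddChar.compAddMonoidHom_apply] at hsum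
  rw [conj_weyl_apply_eq_sum, if_pos h.1, fiber, hsum]
  ring

lemma conj_weyl_apply_of_not_isConjShift {a b x x' : Fin n → ZMod 2}
    (h : ¬ F.IsConjShift a b (x + x')) : (F.toMatrix * weyl a b * F.toMatrixᴴ) x x' = 0 := by
  rw [conj_weyl_apply_eq_sum]
  split_ifs with hL
  · obtain ⟨k, hk, hχk⟩ : ∃ k, F.L (0, k) = 0 ∧ F.conjPhase a b (x + x') (0, k) ≠ 0 := by
      by_contra! hK
      exact h ⟨hL, hK⟩
    have hsum := sum_fiber_eq_zero F.L F.c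
      (sign.compAddMonoidHom (F.conjPhase a b (x + x'))) x' hk
      (by simpa [sign_eq_one_iff] using hχk)
    simp only [AddChar.compAddMonoidHom_apply] at hsum
    rw [fiber, hsum, mul_zero]
  · rfl

section Invertible

variable (hU : IsUnit F.toMatrix)
include hU

lemma lam_ne_zero_of_isUnit : F.lam ≠ 0 :=
  (F.toMatrix_apply_ne_zero (exists_ne_zero_of_isUnit hU 0).choose_spec).2

lemma exists_fiber_of_isUnit (x : Fin n → ZMod 2) : ∃ y, F.L (x, y) = F.c :=
  let ⟨y, hy⟩ := exists_ne_zero_of_isUnit hU x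
  ⟨y, (F.toMatrix_apply_ne_zero hy).1⟩

lemma not_isConjShift_of_isUnit {w : Fin n → ZMod 2} (hw : w ≠ 0) : ¬ F.IsConjShift 0 0 w := by
  rintro ⟨hL, hK⟩
  obtain ⟨y₀, hy₀⟩ := F.exists_fiber_of_isUnit hU 0
  refine not_isUnit_of_row_eq_mul hw
    (μ := iPow (F.Q (w, 0) - F.Q 0) * sign (F.β (w, 0) (0, y₀))) (fun y => ?_) hU
  have hrow := F.toMatrix_add_of_map_eq_zero hL 0 y
  rw [zero_add, add_zero] at hrow
  rw [hrow, mul_comm]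
  by_cases hy : F.L (0, y) = F.c
  · have hβ := hK _ (map_zero_sub_eq_zero F.L hy hy₀)
    simp only [conjPhase_apply, zero_dotProduct, add_zero] at hβ
    rw [show ((0 : Fin n → ZMod 2), y) = (0, y₀) + (0, y - y₀) by simp, map_add, hβ, add_zero]
  · simp [toMatrix_apply, hy]

lemma mul_conjTranspose_eq_smul_one :
    F.toMatrix * F.toMatrixᴴ = ((Complex.normSq F.lam * #(F.fiber 0) : ℝ) : ℂ) • 1 := by
  ext x x'
  by_cases hxx' : x = x'
  · subst hxx'
    obtain ⟨y, hy⟩ := F.exists_fiber_of_isUnit hU x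
    obtain ⟨y₀, hy₀⟩ := F.exists_fiber_of_isUnit hU 0
    rw [mul_conjTranspose_apply_self, fiber, fiber, card_fiber_eq F.L F.c hy hy₀]
    simp
  · have hw : x + x' ≠ 0 := fun h => hxx' <| by
      rw [← add_add_self_of_zmod_two x x', h, add_zero]
    have hMM : F.toMatrix * F.toMatrixᴴ = F.toMatrix * weyl 0 0 * F.toMatrixᴴ := by
      rw [weyl_zero, Matrix.mul_one]
    rw [hMM, F.conj_weyl_apply_of_not_isConjShift (F.not_isConjShift_of_isUnit hU hw)]
    simp [hxx']

theorem exists_smul_mem_unitary :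
    ∃ μ : ℂ, μ ≠ 0 ∧ μ • F.toMatrix ∈ unitary (Matrix (Fin n → ZMod 2) (Fin n → ZMod 2) ℂ) := by
  set R : ℝ := Complex.normSq F.lam * #(F.fiber 0)
  have hR : 0 < R := by
    obtain ⟨y₀, hy₀⟩ := F.exists_fiber_of_isUnit hU 0
    exact mul_pos (Complex.normSq_pos.2 (F.lam_ne_zero_of_isUnit hU))
      (Nat.cast_pos.2 (card_pos.2 ⟨y₀, mem_filter.2 ⟨mem_univ _, hy₀⟩⟩))
  set μ : ℂ := Complex.ofReal (√R)⁻¹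
  have hμ : μ • F.toMatrix * (μ • F.toMatrix)ᴴ = 1 := by
    rw [Matrix.conjTranspose_smul, Matrix.smul_mul, Matrix.mul_smul,
      F.mul_conjTranspose_eq_smul_one hU, smul_smul, smul_smul, Complex.star_def,
      Complex.conj_ofReal, ← Complex.ofReal_mul, ← Complex.ofReal_mul, ← mul_inv,
      Real.mul_self_sqrt hR.le, inv_mul_cancel₀ hR.ne', Complex.ofReal_one, one_smul]
  exact ⟨μ, Complex.ofReal_ne_zero.2 (inv_ne_zero (Real.sqrt_ne_zero'.2 hR)),
    Unitary.mem_iff.2 ⟨mul_eq_one_comm.1 hμ, hμ⟩⟩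

end Invertible

section Unitary

variable (hM : F.toMatrix ∈ unitary (Matrix (Fin n → ZMod 2) (Fin n → ZMod 2) ℂ))
include hM

lemma conj_weyl_apply_of_mem_unitary {a b x x' y₀ : Fin n → ZMod 2}
    (h : F.IsConjShift a b (x + x')) (hy₀ : F.L (x', y₀) = F.c) :
    (F.toMatrix * weyl a b * F.toMatrixᴴ) x x' =
      iPow (F.Q (x + x', a) - F.Q 0) * sign (F.conjPhase a b (x + x') (x', y₀)) := by
  have hnorm : Complex.normSq F.lam * #(F.fiber x') = (1 : ℂ) := by
    rw [← mul_conjTranspose_apply_self, ← Matrix.star_eq_conjTranspose,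
      Unitary.mul_star_self_of_mem hM, Matrix.one_apply_eq]
  rw [F.conj_weyl_apply_of_isConjShift h hy₀, hnorm, one_mul]

lemma existsUnique_isConjShift (a b : Fin n → ZMod 2) : ∃! w, F.IsConjShift a b w := by
  classical
  have hN : F.toMatrix * weyl a b * F.toMatrixᴴ ∈
      unitary (Matrix (Fin n → ZMod 2) (Fin n → ZMod 2) ℂ) :=
    Submonoid.mul_mem _ (Submonoid.mul_mem _ hM (weyl_mem_unitary a b)) (Unitary.star_mem hM)
  have hterm : ∀ x', (F.toMatrix * weyl a b * F.toMatrixᴴ) 0 x' *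
      star ((F.toMatrix * weyl a b * F.toMatrixᴴ) 0 x') =
        if F.IsConjShift a b x' then 1 else 0 := fun x' => by
    rw [Complex.star_def]
    split_ifs with h
    · obtain ⟨y₀, hy₀⟩ := F.exists_fiber_of_isUnit (Unitary.isUnit_coe (U := ⟨_, hM⟩)) x'
      rw [← zero_add x'] at h
      rw [F.conj_weyl_apply_of_mem_unitary hM h hy₀, iPow_mul_sign_mul_conj]
    · rw [← zero_add x'] at h
      rw [F.conj_weyl_apply_of_not_isConjShift h, zero_mul]
  have hcount : ((F.toMatrix * weyl a b * F.toMatrixᴴ) *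
      (F.toMatrix * weyl a b * F.toMatrixᴴ)ᴴ) 0 0 = 1 := by
    have h := Unitary.mul_star_self_of_mem hN
    rw [Matrix.star_eq_conjTranspose] at h
    rw [h, Matrix.one_apply_eq]
  rw [Matrix.mul_apply] at hcount
  simp only [Matrix.conjTranspose_apply, hterm, sum_boole] at hcount
  obtain ⟨w, hw⟩ := card_eq_one.1 (by exact_mod_cast hcount)
  rw [eq_singleton_iff_unique_mem, mem_filter] at hw
  exact ⟨w, hw.1.2, fun w' hw' => hw.2 w' (mem_filter.2 ⟨mem_univ w', hw'⟩)⟩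

theorem conj_weyl_eq_smul_weyl (a b : Fin n → ZMod 2) :
    ∃ (z : ZMod 4) (a' b' : Fin n → ZMod 2),
      F.toMatrix * weyl a b * F.toMatrixᴴ = iPow z • weyl a' b' := by
  obtain ⟨a', ha', huniq⟩ := F.existsUnique_isConjShift hM a b
  have hfib := F.exists_fiber_of_isUnit (Unitary.isUnit_coe (U := ⟨_, hM⟩))
  obtain ⟨κ, b', hκ⟩ := exists_eq_add_dotProduct_of_fiber F.L F.c hfib _ ha'.2
  refine ⟨F.Q (a', a) - F.Q 0 + double κ, a', b', ?_⟩
  ext x x'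
  rw [Matrix.smul_apply, weyl_apply, smul_eq_mul]
  by_cases hx' : x' = x + a'
  · obtain ⟨y₀, hy₀⟩ := hfib x'
    subst hx'
    have hx : x + (x + a') = a' := by rw [add_comm x a', add_add_self_of_zmod_two]
    rw [F.conj_weyl_apply_of_mem_unitary hM (by rwa [hx]) hy₀, if_pos rfl, hx, hκ _ _ hy₀,
      AddChar.map_add_eq_mul, AddChar.map_add_eq_mul, iPow_double]
    ring
  · have hshift : ¬ F.IsConjShift a b (x + x') := fun h => hx' <| by
      rw [← huniq _ h, ← add_assoc, add_self_of_zmod_two, zero_add]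
    rw [F.conj_weyl_apply_of_not_isConjShift hshift, if_neg hx', mul_zero]

lemma inPauli_conj {P : Matrix (Fin n → ZMod 2) (Fin n → ZMod 2) ℂ} (hP : InPauli n P) :
    InPauli n (F.toMatrix * P * F.toMatrixᴴ) :=
  inPauli_conj_of_conj_weyl hM (F.conj_weyl_eq_smul_weyl hM) hP

end Unitary

end AffineForm

section Signature

variable {n : ℕ}

lemma snoc_add {k : ℕ} (x y : Fin k → ZMod 2) (s t : ZMod 2) :
    (Fin.snoc (x + y) (s + t) : Fin (k + 1) → ZMod 2) = Fin.snoc x s + Fin.snoc y t := by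
  ext i
  induction i using Fin.lastCases <;> simp

lemma assemble_add (x y x' y' : Fin n → ZMod 2) :
    assemble (x + x') (y + y') = assemble x y + assemble x' y' := by
  ext i
  simp only [assemble, Pi.add_apply]
  split_ifs <;> rfl

def linearPart : (Fin n → ZMod 2) × (Fin n → ZMod 2) →+ (Fin (2 * n + 1) → ZMod 2) :=
  AddMonoidHom.mk' (fun z => Fin.snoc (assemble z.1 z.2) 0) fun z z' => by
    rw [Prod.fst_add, Prod.snd_add, assemble_add, ← snoc_add, add_zero]

lemma ext_assemble (x y : Fin n → ZMod 2) : ext (assemble x y) = linearPart (x, y) + ext 0 := by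
  rw [_root_.ext, _root_.ext, linearPart, AddMonoidHom.mk'_apply, ← snoc_add, add_zero, zero_add]

def dotProductLinearPart {t : ℕ} (α : Fin t → Fin (2 * n + 1) → ZMod 2) (j : Fin t) :
    (Fin n → ZMod 2) × (Fin n → ZMod 2) →+ ZMod 2 :=
  AddMonoidHom.mk' (fun z => α j ⬝ᵥ linearPart z) fun z z' => by rw [map_add, dotProduct_add]

noncomputable def ofAffine {m t : ℕ} (lam : ℂ) (A : Matrix (Fin m) (Fin (2 * n + 1)) (ZMod 2))
    (α : Fin t → Fin (2 * n + 1) → ZMod 2) : AffineForm n (Fin m → ZMod 2) where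
  lam := lam
  L := A.mulVecLin.toAddMonoidHom.comp linearPart
  c := -(A *ᵥ ext 0)
  Q z := ∑ j, ((dotProductLinearPart α j z + α j ⬝ᵥ ext 0).val : ZMod 4)
  β u := ∑ j, dotProductLinearPart α j u • dotProductLinearPart α j
  isQuadratic := isQuadratic_sum_val _ _

lemma sigMatrix_eq_toMatrix {m t : ℕ} {f : (Fin (2 * n) → ZMod 2) → ℂ} {lam : ℂ}
    {A : Matrix (Fin m) (Fin (2 * n + 1)) (ZMod 2)} {α : Fin t → Fin (2 * n + 1) → ZMod 2}
    (hf : ∀ x, f x = lam * (if A *ᵥ ext x = 0 then 1 else 0) *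
      Complex.I ^ ((∑ j, (∑ i, α j i * ext x i).val) % 4)) :
    sigMatrix n f = (ofAffine lam A α).toMatrix := by
  ext x y
  have hL : A *ᵥ ext (assemble x y) = 0 ↔
      (ofAffine lam A α).L (x, y) = (ofAffine lam A α).c := by
    rw [ext_assemble, mulVec_add, add_eq_zero_iff_eq_neg]
    rfl
  have hQ : Complex.I ^ ((∑ j, (∑ i, α j i * ext (assemble x y) i).val) % 4) =
      iPow ((ofAffine lam A α).Q (x, y)) := by
    rw [← iPow_natCast, ZMod.natCast_mod, Nat.cast_sum]
    simp only [ofAffine, dotProductLinearPart, AddMonoidHom.mk'_apply, ← dotProduct_add,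
      ← ext_assemble]
    rfl
  rw [sigMatrix, of_apply, hf, hQ, AffineForm.toMatrix_apply]
  by_cases h : A *ᵥ ext (assemble x y) = 0
  · rw [if_pos h, if_pos (hL.1 h), mul_one]
    rfl
  · rw [if_neg h, if_neg (mt hL.2 h), mul_zero, zero_mul]

lemma exists_affineForm_of_mem_affMats {M : Matrix (Fin n → ZMod 2) (Fin n → ZMod 2) ℂ}
    (hM : M ∈ AffMats n) : ∃ (m : ℕ) (F : AffineForm n (Fin m → ZMod 2)), F.toMatrix = M := by
  obtain ⟨f, ⟨lam, m, t, A, α, hf⟩, rfl⟩ := hM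
  exact ⟨m, ofAffine lam A α, (sigMatrix_eq_toMatrix hf).symm⟩

end Signature

end AffineClifford

/-- A unitary affine signature matrix conjugates the Pauli group into itself;
consequently 𝒢𝒜ₙ/U(1) ⊆ 𝒞ₙ. -/
theorem UA_stabilizes_Pauli (n : ℕ) :
    (∀ M ∈ AffMats n, M * Mᴴ = 1 → Mᴴ * M = 1 →
      ∀ P, InPauli n P → InPauli n (M * P * Mᴴ)) ∧
    (∀ M ∈ AffMats n, IsUnit M →
      ∃ c : ℂ, c ≠ 0 ∧ (c • M) * (c • M)ᴴ = 1 ∧ (c • M)ᴴ * (c • M) = 1 ∧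
        ∀ P, InPauli n P → InPauli n ((c • M) * P * (c • M)ᴴ)) := by
  constructor
  · rintro M hM h₁ h₂ P hP
    obtain ⟨m, F, rfl⟩ := AffineClifford.exists_affineForm_of_mem_affMats hM
    exact F.inPauli_conj (Unitary.mem_iff.2 ⟨h₂, h₁⟩) hP
  · rintro M hM hU
    obtain ⟨m, F, rfl⟩ := AffineClifford.exists_affineForm_of_mem_affMats hM
    obtain ⟨c, hc, hcM⟩ := F.exists_smul_mem_unitary hU
    refine ⟨c, hc, Unitary.mul_star_self_of_mem hcM, Unitary.star_mul_self_of_mem hcM,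
      fun P hP => ?_⟩
    rw [← F.toMatrix_smul] at hcM ⊢
    exact (c • F).inPauli_conj hcM hP
end
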